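/- arXiv:math/0106121 — 5 statements merged into one kernel-verified Lean document; each statement's English description precedes it below -/
import Mathlib

section
/- Let u be the period-doubling sequence, the fixed point beginning with 0 of the morphism 0 → 01, 1 → 00. Then pal_u(k) = 0 for every even k ≥ 4, and pal_u(k) = pal_u(2k−1) = pal_u(2k+1) for every odd k ≥ 5. Moreover pal_u(1) = 2, pal_u(2) = 1, pal_u(3) = 3, pal_u(4) = 0, pal_u(5) = 4, pal_u(6) = 0, pal_u(7) = 3; consequently pal_u takes only the values 0, 1, 2, 3, 4, and limsup_{k→∞} pal_u(k) = 4. -/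
namespace PalPaper

variable {α : Type*}

/-- The finite word `u i, u (i+1), …, u (i+k-1)` read off the infinite sequence `u`. -/
def factorAt (u : ℕ → α) (i k : ℕ) : List α :=
  (List.range k).map fun j => u (i + j)

/-- `w` occurs as a contiguous block (factor) in the infinite sequence `u`. -/
def IsFactor (u : ℕ → α) (w : List α) : Prop :=
  ∃ i, w = factorAt u i w.length

/-- A palindrome is a word equal to its reversal. -/
def IsPalindrome (w : List α) : Prop := w.reverse = w

/-- Number of distinct factors of length `k` of `u`. -/
noncomputable def facComplexity (u : ℕ → α) (k : ℕ) : ℕ :=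
  Set.ncard {w : List α | w.length = k ∧ IsFactor u w}

/-- Number of distinct palindromic factors of length `k` of `u`. -/
noncomputable def palComplexity (u : ℕ → α) (k : ℕ) : ℕ :=
  Set.ncard {w : List α | w.length = k ∧ IsFactor u w ∧ IsPalindrome w}

/-- `p ≥ 1` is a period of the finite word `w`. -/
def IsPeriodOf (p : ℕ) (w : List α) : Prop :=
  1 ≤ p ∧ ∀ i (h : i + p < w.length), w[i]'(by omega) = w[i + p]'h

/-- The minimal period of a finite word. -/
noncomputable def minPeriod (w : List α) : ℕ := sInf {p | IsPeriodOf p w}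

/-- The prefix of length `m` of the infinite sequence `u`, as a finite word. -/
def seqPrefix (u : ℕ → α) (m : ℕ) : List α := (List.range m).map u

/-- The word `σ(u 0) σ(u 1) ⋯ σ(u (n-1))`. -/
def substPrefix (σ : α → List α) (u : ℕ → α) (n : ℕ) : List α :=
  (List.range n).flatMap fun i => σ (u i)

/-- `v = σ(u)`: every word `σ(u 0) ⋯ σ(u (n-1))` is the corresponding prefix of `v`. -/
def IsMorphicImage (σ : α → List α) (u v : ℕ → α) : Prop :=
  ∀ n, substPrefix σ u n = seqPrefix v (substPrefix σ u n).length

/-- `u` is a fixed point of the morphism `σ`, i.e. `σ(u) = u`. -/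
def IsFixedPointOf (σ : α → List α) (u : ℕ → α) : Prop := IsMorphicImage σ u u

/-- The `k`-th iterate of a morphism, applied to a letter. -/
def morphIter (σ : α → List α) : ℕ → α → List α
  | 0, a => [a]
  | k + 1, a => (σ a).flatMap (morphIter σ k)

/-- A morphism is primitive if some iterate maps every letter to a word
containing every letter. -/
def IsPrimitive (σ : α → List α) : Prop :=
  ∃ k, 1 ≤ k ∧ ∀ a b : α, b ∈ morphIter σ k a

/-! The fixed point satisfies `u(2n) = 0`, `u(2n+1) = 1 - u(n)`, so `σ` maps the factor of
length `k` at `n` onto the factor of length `2k` at `2n`. The morphism `σ` maps a palindrome `w`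
to the palindromes `σ(w)0` and `σ(w)` minus its first letter, and every palindromic factor of odd
length `2k+1` arises in exactly one of these two ways (according to the parity of its position),
from a palindromic factor of length `k` resp. `k+1`. Hence `pal(2k+1) = pal(k) + pal(k+1)` for
`k ≥ 1`. A palindromic factor of even length `≥ 4` has a palindrome `abba` in its middle, which
forces the block `0000`, impossible since `11` is not a factor. So for `k ≥ 4` one of the two
terms vanishes, and everything follows from `pal(1) = 2` and `pal(2) = 1`. -/

section Words

def palFactors (u : ℕ → α) (k : ℕ) : Set (List α) :=
  {w | w.length = k ∧ IsFactor u w ∧ IsPalindrome w}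

lemma palComplexity_eq_ncard (u : ℕ → α) (k : ℕ) :
    palComplexity u k = (palFactors u k).ncard := rfl

lemma mem_palFactors_iff {u : ℕ → α} {k : ℕ} {w : List α} :
    w ∈ palFactors u k ↔ ∃ i, w = factorAt u i k ∧ IsPalindrome w := by
  constructor
  · rintro ⟨rfl, ⟨i, hi⟩, hw⟩
    exact ⟨i, hi, hw⟩
  · rintro ⟨i, rfl, hw⟩
    exact ⟨by simp [factorAt], ⟨i, by simp [factorAt]⟩, hw⟩

lemma palFactors_finite [Finite α] (u : ℕ → α) (k : ℕ) : (palFactors u k).Finite :=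
  (List.finite_length_eq α k).subset fun _ hw => hw.1

lemma factorAt_succ (u : ℕ → α) (i k : ℕ) :
    factorAt u i (k + 1) = u i :: factorAt u (i + 1) k := by
  simp [factorAt, List.range_succ_eq_map, Nat.add_comm, Nat.add_left_comm]

lemma isPalindrome_factorAt_iff (u : ℕ → α) (i k : ℕ) :
    IsPalindrome (factorAt u i k) ↔ ∀ j < k, u (i + j) = u (i + (k - 1 - j)) := by
  simp [IsPalindrome, List.ext_getElem_iff, factorAt, eq_comm]

lemma isPalindrome_cons_append_singleton (a : α) (w : List α) :
    IsPalindrome (a :: (w ++ [a])) ↔ IsPalindrome w := by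
  simp [IsPalindrome]

end Words

section Doubling

def pdDouble (w : List (Fin 2)) : List (Fin 2) := w.flatMap fun a => [0, 1 - a]

@[simp] lemma pdDouble_nil : pdDouble [] = [] := rfl

@[simp] lemma pdDouble_cons (a : Fin 2) (w : List (Fin 2)) :
    pdDouble (a :: w) = 0 :: (1 - a) :: pdDouble w := rfl

@[simp] lemma pdDouble_append (v w : List (Fin 2)) :
    pdDouble (v ++ w) = pdDouble v ++ pdDouble w := List.flatMap_append

lemma pdDouble_injective : Function.Injective pdDouble := by
  intro v w h
  induction v generalizing w with
  | nil => cases w <;> simp_all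
  | cons a v ih =>
    cases w with
    | nil => simp at h
    | cons b w =>
      simp only [pdDouble_cons, List.cons.injEq, true_and] at h
      exact congrArg₂ _ (by omega) (ih h.2)

lemma pdDouble_append_zero_injective :
    Function.Injective fun w => pdDouble w ++ [0] :=
  (List.append_left_injective [0]).comp pdDouble_injective

lemma pdDouble_tail_injOn :
    Set.InjOn (fun w => (pdDouble w).tail) {w | w ≠ []} := by
  intro v hv w hw h
  obtain ⟨a, v, rfl⟩ := List.exists_cons_of_ne_nil hv
  obtain ⟨b, w, rfl⟩ := List.exists_cons_of_ne_nil hw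
  exact pdDouble_injective (by simpa using h)

lemma reverse_pdDouble_append_zero (w : List (Fin 2)) :
    (pdDouble w ++ [0]).reverse = pdDouble w.reverse ++ [0] := by
  induction w with
  | nil => rfl
  | cons a w ih =>
    simp only [pdDouble_cons, List.cons_append, List.reverse_cons, ih, pdDouble_append]
    simp

lemma isPalindrome_pdDouble_append_zero_iff (w : List (Fin 2)) :
    IsPalindrome (pdDouble w ++ [0]) ↔ IsPalindrome w := by
  simp only [IsPalindrome, reverse_pdDouble_append_zero]
  exact pdDouble_append_zero_injective.eq_iff

lemma isPalindrome_pdDouble_tail_iff {w : List (Fin 2)} (hw : w ≠ []) :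
    IsPalindrome (pdDouble w).tail ↔ IsPalindrome w := by
  obtain ⟨a, v, rfl⟩ := List.exists_cons_of_ne_nil hw
  rw [← isPalindrome_pdDouble_append_zero_iff (a :: v), pdDouble_cons, List.tail_cons,
    List.cons_append, isPalindrome_cons_append_singleton]

lemma eq_one_of_pdDouble_append_zero_eq_tail {v w : List (Fin 2)} {a b : Fin 2}
    (h : pdDouble v ++ [0] = (pdDouble (a :: b :: w)).tail) : a = 1 ∧ b = 1 := by
  rcases v with _ | ⟨c, _ | ⟨d, v⟩⟩ <;> simp at h <;> omega

end Doubling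

structure IsPeriodDoubling (u : ℕ → Fin 2) : Prop where
  even : ∀ n, u (2 * n) = 0
  odd : ∀ n, u (2 * n + 1) = 1 - u n

lemma substPrefix_succ (σ : α → List α) (u : ℕ → α) (n : ℕ) :
    substPrefix σ u (n + 1) = substPrefix σ u n ++ σ (u n) := by
  simp [substPrefix, List.range_succ]

lemma isMorphicImage_apply {σ : α → List α} {u v : ℕ → α} {L : ℕ}
    (h : IsMorphicImage σ u v) (hσ : ∀ a, (σ a).length = L) (n j : ℕ) (hj : j < L) :
    v (L * n + j) = (σ (u n))[j]'(by rwa [hσ]) := by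
  have hlen : ∀ m, (substPrefix σ u m).length = L * m := by
    intro m
    induction m with
    | zero => rfl
    | succ m ih => rw [substPrefix_succ, List.length_append, ih, hσ, Nat.mul_succ]
  have hpre := h (n + 1)
  rw [substPrefix_succ] at hpre
  have hi : L * n + j < (substPrefix σ u n ++ σ (u n)).length := by
    rw [List.length_append, hlen, hσ]; omega
  have := List.getElem_of_eq hpre hi
  rw [List.getElem_append_right (by rw [hlen]; omega)] at this
  simp only [seqPrefix, List.getElem_map, List.getElem_range] at this
  rw [← this]
  simp [hlen]

lemma isPeriodDoubling_of_isFixedPointOf {σ : Fin 2 → List (Fin 2)} (hσ0 : σ 0 = [0, 1])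
    (hσ1 : σ 1 = [0, 0]) {u : ℕ → Fin 2} (hfix : IsFixedPointOf σ u) :
    IsPeriodDoubling u := by
  have hσ : ∀ a, σ a = [0, 1 - a] := by
    intro a
    fin_cases a
    · exact hσ0
    · exact hσ1
  have happly := isMorphicImage_apply hfix (L := 2) (by simp [hσ])
  exact ⟨fun n => by simpa [hσ] using happly n 0, fun n => by simpa [hσ] using happly n 1⟩

lemma _root_.Filter.limsup_eq_of_eventually_le_of_frequently_eq {ι β : Type*}
    [ConditionallyCompleteLattice β] [OrderBot β] {l : Filter ι} {f : ι → β} {a : β}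
    (hle : ∀ᶠ i in l, f i ≤ a) (hfreq : ∃ᶠ i in l, f i = a) : Filter.limsup f l = a :=
  le_antisymm (Filter.limsup_le_of_le Filter.isCobounded_le_of_bot hle)
    (Filter.le_limsup_of_frequently_le (hfreq.mono fun _ h => h.ge) ⟨a, hle⟩)

namespace IsPeriodDoubling

variable {u : ℕ → Fin 2} (hu : IsPeriodDoubling u)
include hu

lemma zero_or_zero_succ (j : ℕ) : u j = 0 ∨ u (j + 1) = 0 := by
  obtain ⟨m, rfl | rfl⟩ := Nat.even_or_odd' j
  · exact .inl (hu.even m)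
  · exact .inr (hu.even (m + 1))

lemma not_four_zeros (j : ℕ) :
    ¬ (u j = 0 ∧ u (j + 1) = 0 ∧ u (j + 2) = 0 ∧ u (j + 3) = 0) := by
  rintro ⟨h0, h1, h2, h3⟩
  obtain ⟨m, hm, hm'⟩ : ∃ m, u (2 * m + 1) = 0 ∧ u (2 * (m + 1) + 1) = 0 := by
    obtain ⟨m, rfl | rfl⟩ := Nat.even_or_odd' j
    exacts [⟨m, h1, h3⟩, ⟨m, h0, h2⟩]
  rw [hu.odd] at hm hm'
  rcases hu.zero_or_zero_succ m with h | h <;> simp [h] at hm hm'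

lemma not_isPalindrome_factorAt_of_even {k : ℕ} (hk : Even k) (h4 : 4 ≤ k) (i : ℕ) :
    ¬ IsPalindrome (factorAt u i k) := by
  rw [isPalindrome_factorAt_iff]
  intro hp
  obtain ⟨m, rfl⟩ := hk
  -- the middle block `u c ⋯ u (c+3)` has the form `abba`, and each of the pairs `c, c+3` and
  -- `c+1, c+2` contains an even position, so the block is `0000`
  set c := i + (m - 2)
  have h03 : u c = u (c + 3) := by convert hp (m - 2) (by omega) using 2; omega
  have h12 : u (c + 1) = u (c + 2) := by convert hp (m - 1) (by omega) using 2 <;> omega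
  have hz := hu.zero_or_zero_succ (c + 1)
  have hz' : u c = 0 ∨ u (c + 3) = 0 := by
    obtain ⟨n, hn | hn⟩ := Nat.even_or_odd' c
    · exact .inl (hn ▸ hu.even n)
    · exact .inr (by rw [show c + 3 = 2 * (n + 2) by omega]; exact hu.even _)
  exact hu.not_four_zeros c (by grind)

lemma palComplexity_of_even {k : ℕ} (hk : Even k) (h4 : 4 ≤ k) : palComplexity u k = 0 := by
  rw [palComplexity_eq_ncard, Set.ncard_eq_zero (palFactors_finite u k),
    Set.eq_empty_iff_forall_notMem]
  rintro w hw
  obtain ⟨i, rfl, hp⟩ := mem_palFactors_iff.1 hw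
  exact hu.not_isPalindrome_factorAt_of_even hk h4 i hp

lemma pdDouble_factorAt (i k : ℕ) : pdDouble (factorAt u i k) = factorAt u (2 * i) (2 * k) := by
  induction k generalizing i with
  | zero => rfl
  | succ k ih =>
    rw [factorAt_succ, pdDouble_cons, ih, show 2 * (k + 1) = 2 * k + 1 + 1 by ring,
      factorAt_succ, factorAt_succ, hu.even, hu.odd, show 2 * i + 1 + 1 = 2 * (i + 1) by ring]

lemma pdDouble_factorAt_append_zero (i k : ℕ) :
    pdDouble (factorAt u i k) ++ [0] = factorAt u (2 * i) (2 * k + 1) := by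
  rw [hu.pdDouble_factorAt]
  simp [factorAt, List.range_succ, ← mul_add, hu.even]

lemma pdDouble_factorAt_tail (i k : ℕ) :
    (pdDouble (factorAt u i (k + 1))).tail = factorAt u (2 * i + 1) (2 * k + 1) := by
  rw [hu.pdDouble_factorAt, Nat.mul_succ, factorAt_succ]
  rfl

lemma palFactors_two_mul_add_one (k : ℕ) :
    palFactors u (2 * k + 1) =
      (fun w => pdDouble w ++ [0]) '' palFactors u k ∪
        (fun w => (pdDouble w).tail) '' palFactors u (k + 1) := by
  ext w
  simp only [Set.mem_union, Set.mem_image, mem_palFactors_iff]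
  constructor
  · rintro ⟨i, rfl, hp⟩
    obtain ⟨m, rfl | rfl⟩ := Nat.even_or_odd' i
    · rw [← hu.pdDouble_factorAt_append_zero] at hp ⊢
      exact .inl ⟨_, ⟨m, rfl, (isPalindrome_pdDouble_append_zero_iff _).1 hp⟩, rfl⟩
    · rw [← hu.pdDouble_factorAt_tail] at hp ⊢
      refine .inr ⟨_, ⟨m, rfl, (isPalindrome_pdDouble_tail_iff ?_).1 hp⟩, rfl⟩
      simp [factorAt_succ]
  · rintro (⟨_, ⟨m, rfl, hp⟩, rfl⟩ | ⟨_, ⟨m, rfl, hp⟩, rfl⟩)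
    · exact ⟨2 * m, hu.pdDouble_factorAt_append_zero m k,
        (isPalindrome_pdDouble_append_zero_iff _).2 hp⟩
    · exact ⟨2 * m + 1, hu.pdDouble_factorAt_tail m k,
        (isPalindrome_pdDouble_tail_iff (by simp [factorAt_succ])).2 hp⟩

lemma palComplexity_two_mul_add_one {k : ℕ} (hk : 1 ≤ k) :
    palComplexity u (2 * k + 1) = palComplexity u k + palComplexity u (k + 1) := by
  have hdisj : Disjoint ((fun w => pdDouble w ++ [0]) '' palFactors u k)
      ((fun w => (pdDouble w).tail) '' palFactors u (k + 1)) := by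
    rw [Set.disjoint_left]
    rintro _ ⟨v, -, rfl⟩ ⟨_, hw, heq⟩
    obtain ⟨m, rfl, -⟩ := mem_palFactors_iff.1 hw
    obtain ⟨k, rfl⟩ := Nat.exists_eq_add_of_le' hk
    rw [factorAt_succ, factorAt_succ] at heq
    have ⟨h1, h1'⟩ := eq_one_of_pdDouble_append_zero_eq_tail heq.symm
    rcases hu.zero_or_zero_succ m with h | h <;> simp_all
  have hinj : Set.InjOn (fun w => (pdDouble w).tail) (palFactors u (k + 1)) :=
    pdDouble_tail_injOn.mono fun w hw => List.ne_nil_of_length_pos (by rw [hw.1]; omega)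
  rw [palComplexity_eq_ncard, hu.palFactors_two_mul_add_one,
    Set.ncard_union_eq hdisj ((palFactors_finite u k).image _)
      ((palFactors_finite u (k + 1)).image _),
    Set.ncard_image_of_injective _ pdDouble_append_zero_injective, hinj.ncard_image]
  rfl

lemma palComplexity_two_mul_add_one_of_odd {k : ℕ} (hk : Odd k) (h3 : 3 ≤ k) :
    palComplexity u (2 * k + 1) = palComplexity u k := by
  rw [hu.palComplexity_two_mul_add_one (by omega),
    hu.palComplexity_of_even (k := k + 1) hk.add_one (by omega), add_zero]

lemma palComplexity_two_mul_add_one_of_even {k : ℕ} (hk : Even k) (h4 : 4 ≤ k) :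
    palComplexity u (2 * k + 1) = palComplexity u (k + 1) := by
  rw [hu.palComplexity_two_mul_add_one (by omega), hu.palComplexity_of_even hk h4, zero_add]

lemma apply_one : u 1 = 1 := by simpa [hu.even 0] using hu.odd 0

lemma apply_three : u 3 = 0 := by simpa [hu.apply_one] using hu.odd 1

lemma palComplexity_one : palComplexity u 1 = 2 := by
  have hset : palFactors u 1 = {[0], [1]} := by
    ext w
    simp only [mem_palFactors_iff, Set.mem_insert_iff, Set.mem_singleton_iff]
    constructor
    · rintro ⟨i, rfl, -⟩
      rcases Fin.exists_fin_two.1 ⟨u i, rfl⟩ with h | h <;> simp [factorAt, h]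
    · rintro (rfl | rfl)
      exacts [⟨0, by simpa [factorAt] using (hu.even 0).symm, rfl⟩,
        ⟨1, by simp [factorAt, hu.apply_one], rfl⟩]
  rw [palComplexity_eq_ncard, hset, Set.ncard_pair (by simp)]

lemma palComplexity_two : palComplexity u 2 = 1 := by
  have hset : palFactors u 2 = {[0, 0]} := by
    ext w
    simp only [mem_palFactors_iff, Set.mem_singleton_iff]
    constructor
    · rintro ⟨i, rfl, hp⟩
      have h := (isPalindrome_factorAt_iff u i 2).1 hp 0 (by omega)
      rcases hu.zero_or_zero_succ i with h' | h' <;> simp_all [factorAt, List.range_succ]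
    · rintro rfl
      exact ⟨2, by simp [factorAt, List.range_succ, hu.even 1, hu.apply_three], rfl⟩
  rw [palComplexity_eq_ncard, hset, Set.ncard_singleton]

lemma palComplexity_three : palComplexity u 3 = 3 := by
  rw [hu.palComplexity_two_mul_add_one (k := 1) le_rfl, hu.palComplexity_one, hu.palComplexity_two]

lemma palComplexity_five : palComplexity u 5 = 4 := by
  rw [hu.palComplexity_two_mul_add_one (k := 2) (by omega), hu.palComplexity_two,
    hu.palComplexity_three]

lemma palComplexity_seven : palComplexity u 7 = 3 := by
  rw [hu.palComplexity_two_mul_add_one_of_odd (k := 3) (by decide) le_rfl, hu.palComplexity_three]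

lemma palComplexity_le_four {k : ℕ} (hk : 1 ≤ k) : palComplexity u k ≤ 4 := by
  induction k using Nat.strong_induction_on with
  | _ k ih =>
    obtain hk9 | hk9 := lt_or_ge k 9
    · interval_cases k
      all_goals first
        | rw [hu.palComplexity_of_even (by decide) (by omega)]; omega
        | simp [hu.palComplexity_one, hu.palComplexity_two, hu.palComplexity_three,
            hu.palComplexity_five, hu.palComplexity_seven]
    obtain ⟨j, rfl | rfl⟩ := Nat.even_or_odd' k
    · rw [hu.palComplexity_of_even (even_two_mul j) (by omega)]
      omega
    obtain hj | hj := Nat.even_or_odd j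
    · rw [hu.palComplexity_two_mul_add_one_of_even hj (by omega)]
      exact ih _ (by omega) (by omega)
    · rw [hu.palComplexity_two_mul_add_one_of_odd hj (by omega)]
      exact ih _ (by omega) (by omega)

lemma palComplexity_two_pow_add_one {n : ℕ} (hn : 2 ≤ n) : palComplexity u (2 ^ n + 1) = 4 := by
  induction n, hn using Nat.le_induction with
  | base => exact hu.palComplexity_five
  | succ n hn ih =>
    rw [pow_succ', hu.palComplexity_two_mul_add_one_of_even ((Nat.even_pow' (by omega)).2 even_two)
      (Nat.pow_le_pow_right two_pos hn), ih]

lemma frequently_palComplexity_eq_four : ∃ᶠ k in Filter.atTop, palComplexity u k = 4 := by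
  refine Filter.frequently_atTop.2 fun N =>
    ⟨2 ^ (N + 2) + 1, ?_, hu.palComplexity_two_pow_add_one (by omega)⟩
  have := Nat.lt_two_pow_self (n := N + 2)
  omega

end IsPeriodDoubling

theorem stmt5_general (σ : Fin 2 → List (Fin 2)) (hσ0 : σ 0 = [0, 1]) (hσ1 : σ 1 = [0, 0])
    (u : ℕ → Fin 2) (hfix : IsFixedPointOf σ u) :
    (∀ k, Even k → 4 ≤ k → palComplexity u k = 0) ∧
    (∀ k, Odd k → 5 ≤ k →
      palComplexity u k = palComplexity u (2 * k - 1) ∧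
      palComplexity u k = palComplexity u (2 * k + 1)) ∧
    palComplexity u 1 = 2 ∧ palComplexity u 2 = 1 ∧ palComplexity u 3 = 3 ∧
    palComplexity u 4 = 0 ∧ palComplexity u 5 = 4 ∧ palComplexity u 6 = 0 ∧
    palComplexity u 7 = 3 ∧
    (∀ k, 1 ≤ k → palComplexity u k ≤ 4) ∧
    Filter.limsup (fun k => palComplexity u k) Filter.atTop = 4 := by
  have hu := isPeriodDoubling_of_isFixedPointOf hσ0 hσ1 hfix
  refine ⟨fun k hk h4 => hu.palComplexity_of_even hk h4, fun k hk h5 => ⟨?_, ?_⟩,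
    hu.palComplexity_one, hu.palComplexity_two, hu.palComplexity_three,
    hu.palComplexity_of_even (by decide) le_rfl, hu.palComplexity_five,
    hu.palComplexity_of_even (by decide) (by omega), hu.palComplexity_seven,
    fun k hk => hu.palComplexity_le_four hk, ?_⟩
  · obtain ⟨j, rfl⟩ := hk
    rw [show 2 * (2 * j + 1) - 1 = 2 * (2 * j) + 1 by omega,
      hu.palComplexity_two_mul_add_one_of_even (even_two_mul j) (by omega)]
  · exact (hu.palComplexity_two_mul_add_one_of_odd hk (by omega)).symm
  · exact Filter.limsup_eq_of_eventually_le_of_frequently_eq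
      (Filter.eventually_atTop.2 ⟨1, fun k hk => hu.palComplexity_le_four hk⟩)
      hu.frequently_palComplexity_eq_four

/-- Damanik's theorem on the palindrome complexity of the period-doubling
sequence, the fixed point beginning with `0` of `0 → 01`, `1 → 00`. -/
theorem stmt5 (σ : Fin 2 → List (Fin 2)) (hσ0 : σ 0 = [0, 1]) (hσ1 : σ 1 = [0, 0])
    (u : ℕ → Fin 2) (h0 : u 0 = 0) (hfix : IsFixedPointOf σ u) :
    (∀ k, Even k → 4 ≤ k → palComplexity u k = 0) ∧
    (∀ k, Odd k → 5 ≤ k →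
      palComplexity u k = palComplexity u (2 * k - 1) ∧
      palComplexity u k = palComplexity u (2 * k + 1)) ∧
    palComplexity u 1 = 2 ∧ palComplexity u 2 = 1 ∧ palComplexity u 3 = 3 ∧
    palComplexity u 4 = 0 ∧ palComplexity u 5 = 4 ∧ palComplexity u 6 = 0 ∧
    palComplexity u 7 = 3 ∧
    (∀ k, 1 ≤ k → palComplexity u k ≤ 4) ∧
    Filter.limsup (fun k => palComplexity u k) Filter.atTop = 4 :=
  stmt5_general σ hσ0 hσ1 u hfix

end PalPaper
end

section
/- Let T be an even positive integer, let x and y be words of length T/2, and let w be the prefix of length n ≥ 2T of the infinite periodic sequence xyxyxy…, and suppose w is a palindrome whose minimal period is T. Let w^Θ be the prefix of length n of the infinite periodic sequence yxyxyx…. Then w^Θ is a palindrome, its minimal period is T, and w^Θ ≠ w. -/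
namespace PalPaper

variable {α : Type*}

/-- The prefix of length `n` of the periodic infinite sequence `v v v ⋯`. -/
def periodicWord [Inhabited α] (v : List α) (n : ℕ) : List α :=
  (List.range n).map fun i => v.getD (i % v.length) default

/-!
Both `w` and its twin are length-`n` windows of one `T`-periodic sequence `u`, the twin being
shifted by `T / 2`. Since the reflection `i ↦ n - 1 - i` turns a shift by `T / 2` into a shift by
`-T / 2 ≡ T / 2 (mod T)`, the twin is again a palindrome. A window of length `n ≥ 2T` already
contains every residue class modulo `T` followed by its next `T` letters, so all windows of
length `n` of `u` have the same periods below `T`, hence the same minimal period. Finally, the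
twin equals `w` only if `T / 2` is a period of `w`, contradicting minimality.
-/

open Function

section Words

variable {α : Type*}

theorem minPeriod_le_of_isPeriodOf {p : ℕ} {w : List α} (h : IsPeriodOf p w) : minPeriod w ≤ p :=
  Nat.sInf_le h

theorem isPalindrome_seqPrefix_iff (u : ℕ → α) (n : ℕ) :
    IsPalindrome (seqPrefix u n) ↔ ∀ i < n, u (n - 1 - i) = u i := by
  simp only [IsPalindrome, List.ext_getElem_iff, List.length_reverse, List.getElem_reverse,
    seqPrefix, List.length_map, List.length_range, List.getElem_map, List.getElem_range,
    true_and]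
  exact ⟨fun h i hi => h i hi hi, fun h i hi _ => h i hi⟩

theorem isPeriodOf_seqPrefix_iff (u : ℕ → α) (n p : ℕ) :
    IsPeriodOf p (seqPrefix u n) ↔ 1 ≤ p ∧ ∀ i, i + p < n → u i = u (i + p) := by
  simp [IsPeriodOf, seqPrefix]

theorem isPeriodOf_seqPrefix_of_periodic {u : ℕ → α} {T : ℕ} (hu : Periodic u T) (hT : 0 < T)
    (n : ℕ) : IsPeriodOf T (seqPrefix u n) :=
  (isPeriodOf_seqPrefix_iff u n T).2 ⟨hT, fun i _ => (hu i).symm⟩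

theorem isPeriodOf_seqPrefix_of_shift_eq {u : ℕ → α} {n s : ℕ} (hs : 1 ≤ s)
    (h : seqPrefix (fun i => u (i + s)) n = seqPrefix u n) : IsPeriodOf s (seqPrefix u n) := by
  refine (isPeriodOf_seqPrefix_iff u n s).2 ⟨hs, fun i hi => ?_⟩
  have := congrArg (·[i]?) h
  simpa [seqPrefix, show i < n by omega] using this.symm

theorem IsPalindrome.seqPrefix_shift {u : ℕ → α} {n s : ℕ} (hu : Periodic u (2 * s))
    (hn : 2 * s ≤ n) (h : IsPalindrome (seqPrefix u n)) :
    IsPalindrome (seqPrefix (fun i => u (i + s)) n) := by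
  rw [isPalindrome_seqPrefix_iff] at h ⊢
  intro i hi
  by_cases his : i + s < n
  · calc u (n - 1 - i + s) = u (n - 1 - (i + s) + 2 * s) := by congr 1; omega
      _ = u (i + s) := by rw [hu, h _ his]
  · calc u (n - 1 - i + s) = u (n - 1 - (i - s)) := by congr 1; omega
      _ = u (i - s + 2 * s) := by rw [h _ (by omega), hu]
      _ = u (i + s) := by congr 1; omega

theorem IsPeriodOf.seqPrefix_shift {u : ℕ → α} {T n p : ℕ} (hu : Periodic u T) (hT : 0 < T)
    (hpn : T + p ≤ n) (hp : IsPeriodOf p (seqPrefix u n)) (s : ℕ) :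
    IsPeriodOf p (seqPrefix (fun i => u (i + s)) n) := by
  rw [isPeriodOf_seqPrefix_iff] at hp ⊢
  refine ⟨hp.1, fun i _ => ?_⟩
  have hj : (i + s) % T + p < n := by have := Nat.mod_lt (i + s) hT; omega
  calc u (i + s) = u ((i + s) % T) := (hu.map_mod_nat _).symm
    _ = u ((i + s) % T + p) := hp.2 _ hj
    _ = u (i + p + s) := by
      rw [← hu.map_mod_nat ((i + s) % T + p), Nat.mod_add_mod, hu.map_mod_nat, add_right_comm]

theorem minPeriod_seqPrefix_shift {u : ℕ → α} {T n : ℕ} (hu : Periodic u T) (hT : 0 < T)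
    (hn : 2 * T ≤ n) (hmin : minPeriod (seqPrefix u n) = T) (s : ℕ) :
    minPeriod (seqPrefix (fun i => u (i + s)) n) = T := by
  set v : ℕ → α := fun i => u (i + s)
  have hv : Periodic v T := fun i => by simp only [v, add_right_comm i T s, hu _]
  have hTv : IsPeriodOf T (seqPrefix v n) := isPeriodOf_seqPrefix_of_periodic hv hT n
  have hvu : (fun i => v (i + (T - 1) * s)) = u := by
    funext i
    have : i + (T - 1) * s + s = i + s * T := by
      rw [add_assoc, ← Nat.succ_mul, Nat.succ_eq_add_one, Nat.sub_add_cancel hT, mul_comm]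
    simp only [v, this]
    exact hu.nat_mul s i
  refine le_antisymm (Nat.sInf_le hTv) (le_csInf ⟨T, hTv⟩ fun p hp => ?_)
  by_contra! hpT
  have hpu : IsPeriodOf p (seqPrefix u n) := by
    simpa only [hvu] using IsPeriodOf.seqPrefix_shift hv hT (by omega) hp ((T - 1) * s)
  have := minPeriod_le_of_isPeriodOf hpu
  omega

end Words

section PeriodicWord

variable {α : Type*} [Inhabited α]

def periodicSeq (l : List α) (i : ℕ) : α := l.getD (i % l.length) default

theorem periodicWord_eq_seqPrefix (l : List α) (n : ℕ) :
    periodicWord l n = seqPrefix (periodicSeq l) n := rfl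

theorem periodicSeq_periodic (l : List α) : Periodic (periodicSeq l) l.length := fun i => by
  simp [periodicSeq]

theorem periodicSeq_rotate (l : List α) (k i : ℕ) :
    periodicSeq (l.rotate k) i = periodicSeq l (i + k) := by
  rcases eq_or_ne l [] with rfl | hl
  · simp [periodicSeq]
  have hL := List.length_pos_iff.2 hl
  simp only [periodicSeq, List.length_rotate]
  rw [List.getD_eq_getElem _ _ (by simpa using Nat.mod_lt i hL),
    List.getD_eq_getElem _ _ (Nat.mod_lt _ hL), List.getElem_rotate]
  simp only [Nat.mod_add_mod]

end PeriodicWord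

/-- Twin of a palindrome of even period: if `w` is the palindromic prefix of
length `n ≥ 2T` of `xyxyxy⋯` with minimal period `T` even and `|x| = |y| = T/2`,
then the prefix `w^Θ` of length `n` of `yxyxyx⋯` is a palindrome of the same
minimal period `T`, and `w^Θ ≠ w`. -/
theorem stmt12 {α : Type*} [Inhabited α] (T n : ℕ) (hT : 0 < T) (hTe : Even T)
    (x y : List α) (hx : x.length = T / 2) (hy : y.length = T / 2)
    (hn : 2 * T ≤ n)
    (w : List α) (hw : w = periodicWord (x ++ y) n)
    (hpal : IsPalindrome w) (hmin : minPeriod w = T) :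
    IsPalindrome (periodicWord (y ++ x) n) ∧
    minPeriod (periodicWord (y ++ x) n) = T ∧
    periodicWord (y ++ x) n ≠ w := by
  obtain ⟨t, rfl⟩ := hTe
  have hxt : x.length = t := by omega
  have hyt : y.length = t := by omega
  subst hw
  simp only [periodicWord_eq_seqPrefix] at hpal hmin ⊢
  set u := periodicSeq (x ++ y)
  have hu : Periodic u (2 * t) := by
    simpa [u, hxt, hyt, two_mul] using periodicSeq_periodic (x ++ y)
  have htwin : periodicSeq (y ++ x) = fun i => u (i + t) := by
    funext i
    rw [← hxt, ← List.rotate_append_length_eq, periodicSeq_rotate]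
  rw [htwin]
  rw [← two_mul] at hT hmin hn ⊢
  refine ⟨hpal.seqPrefix_shift hu (by omega), minPeriod_seqPrefix_shift hu hT hn hmin t,
    fun h => ?_⟩
  have := minPeriod_le_of_isPeriodOf (isPeriodOf_seqPrefix_of_shift_eq (by omega) h)
  omega

end PalPaper
end

section
/- Let u be an infinite sequence over a finite alphabet whose block complexity satisfies fac_u(k) ≤ C·k for all k ≥ 1, for some constant C. Then the palindrome complexity of u is bounded: there exists a constant C' such that pal_u(k) ≤ C' for all k ≥ 1. -/
/-!
An eventually periodic sequence has boundedly many factors of each length. Otherwise fix `n` and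
`m = n / 8`. Two palindromes of length `n` at distance `d` give a period `2 d`, so by Fine–Wilf
three of them starting within `m` of each other share the period `2 gcd`, under which two of them
coincide: a window of length `n + m` sees at most two palindromes starting in its first `m`
positions. A palindrome with an occurrence at position `≥ m` is attached to `m` distinct windows:
if its minimal period exceeds `m`, the windows containing that occurrence at offset `< m`;
otherwise the windows straddling the end of the periodic run through it, which recover it as a
factor of the periodic extension of their beginning. Each window is attached to at most four
palindromes and at most two palindromes occur only before position `m`, hence
`pal(n) * m ≤ 4 fac(n + m) + 2 m`, and the right side is `O(m)`.
-/

namespace PalPaper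

variable {α : Type*}

lemma factorAt_eq_factorAt_iff {f g : ℕ → α} {i j k : ℕ} :
    factorAt f i k = factorAt g j k ↔ ∀ x < k, f (i + x) = g (j + x) := by
  simp [factorAt, List.map_inj_left]

lemma factorAt_shift (f : ℕ → α) (a s k : ℕ) :
    factorAt (fun x => f (a + x)) s k = factorAt f (a + s) k := by
  simp [factorAt, Nat.add_assoc]

lemma isFactor_factorAt (u : ℕ → α) (i k : ℕ) : IsFactor u (factorAt u i k) :=
  ⟨i, by simp [factorAt]⟩

@[simp]
lemma length_factorAt (f : ℕ → α) (i k : ℕ) : (factorAt f i k).length = k := by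
  simp [factorAt]

lemma hasPeriod_factorAt_iff {f : ℕ → α} {s L p : ℕ} :
    (factorAt f s L).HasPeriod p ↔ ∀ x, x + p < L → f (s + x) = f (s + x + p) := by
  rw [List.hasPeriod_iff_getElem?, length_factorAt]
  refine ⟨fun h x hx => ?_, fun h x hx => ?_⟩
  · simpa [factorAt, List.getElem?_range, hx, show x < L by omega, Nat.add_assoc] using h x (by omega)
  · simpa [factorAt, List.getElem?_range, show x < L by omega, show x + p < L by omega,
      Nat.add_assoc] using h x (by omega)

lemma isPeriodOf_iff_hasPeriod {p : ℕ} {w : List α} :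
    IsPeriodOf p w ↔ 0 < p ∧ w.HasPeriod p := by
  rw [List.hasPeriod_iff_getElem?, IsPeriodOf]
  refine and_congr_right fun _ => ⟨fun h i hi => ?_, fun h i hi => ?_⟩
  · rw [List.getElem?_eq_getElem (by omega), List.getElem?_eq_getElem (by omega), h i (by omega)]
  · simpa [List.getElem?_eq_getElem, hi, show i < w.length by omega] using h i (by omega)

lemma apply_eq_apply_of_isPalindrome_factorAt {f : ℕ → α} {s n a b : ℕ}
    (h : IsPalindrome (factorAt f s n)) (ha : s ≤ a) (hb : s ≤ b) (hab : a + b + 1 = 2 * s + n) :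
    f a = f b := by
  have := congrArg (·[b - s]?) h
  simpa [factorAt, show b - s < n by omega, show s + (n - 1 - (b - s)) = a by omega,
    show s + (b - s) = b by omega] using this

lemma isPeriodOf_minPeriod (w : List α) : IsPeriodOf (minPeriod w) w :=
  Nat.sInf_mem (s := {p | IsPeriodOf p w}) ⟨w.length + 1, isPeriodOf_iff_hasPeriod.mpr
    ⟨w.length.succ_pos, List.hasPeriod_of_length_le _ _ (by omega)⟩⟩

lemma minPeriod_pos (w : List α) : 0 < minPeriod w :=
  (isPeriodOf_iff_hasPeriod.mp (isPeriodOf_minPeriod w)).1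

lemma hasPeriod_minPeriod (w : List α) : w.HasPeriod (minPeriod w) :=
  (isPeriodOf_iff_hasPeriod.mp (isPeriodOf_minPeriod w)).2

lemma minPeriod_le {w : List α} {p : ℕ} (hp : 0 < p) (h : w.HasPeriod p) : minPeriod w ≤ p :=
  Nat.sInf_le (isPeriodOf_iff_hasPeriod.mpr ⟨hp, h⟩)

lemma hasPeriod_factorAt_mono {f : ℕ → α} {s L p a L' : ℕ} (h : (factorAt f s L).HasPeriod p)
    (hL : a + L' ≤ L) : (factorAt f (s + a) L').HasPeriod p := by
  rw [hasPeriod_factorAt_iff] at h ⊢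
  intro x hx
  simpa [Nat.add_assoc] using h (a + x) (by omega)

lemma apply_eq_of_hasPeriod_factorAt {f : ℕ → α} {s L p x y : ℕ}
    (h : (factorAt f s L).HasPeriod p) (hx : x < L) (hy : y < L) (hxy : x ≡ y [MOD p]) :
    f (s + x) = f (s + y) := by
  have := (h.getElem?_mod p x _ (by simpa)).symm.trans
    ((congrArg _ hxy).trans (h.getElem?_mod p y _ (by simpa)))
  simpa [factorAt, hx, hy] using this

lemma factorAt_eq_of_hasPeriod {f : ℕ → α} {s L p x y n : ℕ}
    (h : (factorAt f s L).HasPeriod p) (hx : x + n ≤ L) (hy : y + n ≤ L) (hxy : x ≡ y [MOD p]) :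
    factorAt f (s + x) n = factorAt f (s + y) n := by
  rw [factorAt_eq_factorAt_iff]
  intro t ht
  simpa [Nat.add_assoc] using
    apply_eq_of_hasPeriod_factorAt h (x := x + t) (y := y + t) (by omega) (by omega) (hxy.add_right t)

lemma hasPeriod_factorAt_extend {f : ℕ → α} {s L q g len : ℕ}
    (hq : (factorAt f s L).HasPeriod q) (hg : (factorAt f s len).HasPeriod g) (hq0 : 0 < q)
    (hlen : 2 * q + g ≤ len) : (factorAt f s L).HasPeriod g := by
  rw [hasPeriod_factorAt_iff] at hq hg ⊢
  intro x
  induction x using Nat.strong_induction_on with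
  | _ x ih =>
    intro hx
    by_cases hxlen : x + g < len
    · exact hg x hxlen
    · calc f (s + x) = f (s + (x - q)) := by
            simpa [show s + (x - q) + q = s + x by omega] using (hq (x - q) (by omega)).symm
        _ = f (s + (x - q) + g) := ih (x - q) (by omega) (by omega)
        _ = f (s + x + g) := by
            simpa [show s + (x - q + g) + q = s + x + g by omega, Nat.add_assoc] using
              hq (x - q + g) (by omega)

lemma hasPeriod_two_mul_of_isPalindrome {f : ℕ → α} {s n d : ℕ}
    (h₀ : IsPalindrome (factorAt f s n)) (hd : IsPalindrome (factorAt f (s + d) n)) :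
    (factorAt f s (n + d)).HasPeriod (2 * d) := by
  rw [hasPeriod_factorAt_iff]
  intro x hx
  calc f (s + x) = f (s + (n - 1 - x)) :=
        apply_eq_apply_of_isPalindrome_factorAt h₀ (by omega) (by omega) (by omega)
    _ = f (s + x + 2 * d) :=
        apply_eq_apply_of_isPalindrome_factorAt hd (by omega) (by omega) (by omega)

lemma exists_factorAt_eq_periodic {f : ℕ → α} {s L δ n a : ℕ}
    (h : (factorAt f s L).HasPeriod δ) (hδ : 0 < δ) (hn : n ≤ L) (ha : a + δ ≤ L) :
    ∃ E < δ, factorAt f s n = factorAt (fun x => f (s + a + x % δ)) E n := by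
  set E := (δ * a - a) % δ
  refine ⟨E, Nat.mod_lt _ hδ, factorAt_eq_factorAt_iff.mpr fun t ht => ?_⟩
  have hphase : t ≡ a + (E + t) % δ [MOD δ] := by
    symm
    calc a + (E + t) % δ ≡ a + (E + t) [MOD δ] := Nat.ModEq.add_left _ (Nat.mod_modEq _ _)
      _ = (δ * a - a) % δ + a + t := by omega
      _ ≡ δ * a - a + a + t [MOD δ] :=
          Nat.ModEq.add_right _ (Nat.ModEq.add_right _ (Nat.mod_modEq _ _))
      _ = δ * a + t := by have : a ≤ δ * a := Nat.le_mul_of_pos_left a hδ; omega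
      _ ≡ t [MOD δ] := by simp [Nat.ModEq]
  simpa [Nat.add_assoc] using apply_eq_of_hasPeriod_factorAt h (by omega)
    (by have := Nat.mod_lt (E + t) hδ; omega) hphase

lemma factorAt_eq_or_of_isPalindrome {f : ℕ → α} {n m b c : ℕ} (h8 : 8 * m ≤ n)
    (hb : 0 < b) (hc : 0 < c) (hbm : b ≤ m) (hcm : c ≤ m)
    (h₀ : IsPalindrome (factorAt f 0 n)) (h_b : IsPalindrome (factorAt f b n))
    (h_c : IsPalindrome (factorAt f c n)) :
    factorAt f 0 n = factorAt f b n ∨ factorAt f 0 n = factorAt f c n ∨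
      factorAt f b n = factorAt f c n := by
  have hper : ∀ d, IsPalindrome (factorAt f d n) → (factorAt f 0 (n + d)).HasPeriod (2 * d) :=
    fun d hd => hasPeriod_two_mul_of_isPalindrome h₀ (by simpa using hd)
  have hper_n : ∀ d, IsPalindrome (factorAt f d n) → (factorAt f 0 n).HasPeriod (2 * d) :=
    fun d hd => by simpa using hasPeriod_factorAt_mono (hper d hd) (a := 0) (L' := n) (by omega)
  set e := Nat.gcd b c
  have he : 0 < e := Nat.gcd_pos_of_pos_left _ hb
  have hem : e ≤ m := (Nat.gcd_le_left c hb).trans hbm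
  have hgcd : (factorAt f 0 n).HasPeriod (2 * e) := by
    rw [← Nat.gcd_mul_left]
    exact (hper_n b h_b).gcd (hper_n c h_c) (by simp only [length_factorAt]; omega)
  -- `d` is `0` or `e` modulo the period `2 * e`, by the parity of `d / e`
  have key : ∀ d, 0 < d → d ≤ m → e ∣ d → IsPalindrome (factorAt f d n) →
      factorAt f d n = factorAt f 0 n ∨ factorAt f d n = factorAt f e n := by
    rintro d hd hdm ⟨k, hk⟩ hpal
    have hlong : (factorAt f 0 (n + d)).HasPeriod (2 * e) :=
      hasPeriod_factorAt_extend (hper d hpal) hgcd (by omega) (by omega)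
    rcases Nat.even_or_odd k with ⟨j, hj⟩ | ⟨j, hj⟩
    · have hd' : d = 2 * e * j := by rw [hk, hj]; ring
      left
      simpa using factorAt_eq_of_hasPeriod hlong (x := d) (y := 0) (by omega) (by omega)
        (Nat.modEq_zero_iff_dvd.mpr ⟨j, hd'⟩)
    · have hd' : d = 2 * e * j + e := by rw [hk, hj]; ring
      right
      simpa using factorAt_eq_of_hasPeriod hlong (x := d) (y := e) (by omega) (by omega)
        ((Nat.modEq_iff_dvd' (by omega)).mpr ⟨j, by omega⟩).symm
  rcases key b hb hbm (Nat.gcd_dvd_left b c) h_b with hb' | hb'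
  · exact Or.inl hb'.symm
  rcases key c hc hcm (Nat.gcd_dvd_right b c) h_c with hc' | hc'
  · exact Or.inr (Or.inl hc'.symm)
  exact Or.inr (Or.inr (hb'.trans hc'.symm))

lemma exists_card_le_two_of_isPalindrome (f : ℕ → α) {n m : ℕ} (h8 : 8 * m ≤ n) :
    ∃ W : Finset (List α), W.card ≤ 2 ∧
      ∀ s ≤ m, IsPalindrome (factorAt f s n) → factorAt f s n ∈ W := by
  classical
  by_cases hex : ∃ a, a ≤ m ∧ IsPalindrome (factorAt f a n)
  swap
  · exact ⟨∅, by simp, fun s hs hp => (hex ⟨s, hs, hp⟩).elim⟩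
  set a := Nat.find hex
  obtain ⟨ham, ha⟩ : a ≤ m ∧ IsPalindrome (factorAt f a n) := Nat.find_spec hex
  by_cases hother : ∃ b ≤ m, IsPalindrome (factorAt f b n) ∧ factorAt f b n ≠ factorAt f a n
  swap
  · push Not at hother
    exact ⟨{factorAt f a n}, by simp, fun s hs hp => by simp [hother s hs hp]⟩
  obtain ⟨b, hbm, hb, hba⟩ := hother
  refine ⟨{factorAt f a n, factorAt f b n}, Finset.card_le_two, fun c hcm hc => ?_⟩
  have hab : a < b := lt_of_le_of_ne (Nat.find_min' hex ⟨hbm, hb⟩) (by rintro rfl; exact hba rfl)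
  rcases (Nat.find_min' hex ⟨hcm, hc⟩).eq_or_lt with hac | hac
  · rw [← hac]
    exact Finset.mem_insert_self _ _
  have hshift : ∀ s, a ≤ s → factorAt (fun x => f (a + x)) (s - a) n = factorAt f s n :=
    fun s hs => by rw [factorAt_shift, Nat.add_sub_cancel' hs]
  have := factorAt_eq_or_of_isPalindrome (f := fun x => f (a + x)) h8 (b := b - a) (c := c - a)
    (by omega) (by omega) (by omega) (by omega) (by simpa [factorAt_shift] using ha)
    (by rwa [hshift b hab.le]) (by rwa [hshift c hac.le])
  rw [hshift b hab.le, hshift c hac.le, factorAt_shift, Nat.add_zero] at this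
  rcases this with h | h | h
  · exact absurd h.symm hba
  · simp [← h]
  · simp [h]

lemma minPeriod_factorAt_mod_le {f : ℕ → α} {L δ p E n : ℕ}
    (hδ : (factorAt f 0 L).HasPeriod δ) (hp : (factorAt f 0 L).HasPeriod p) (hδ0 : 0 < δ)
    (hp0 : 0 < p) (hL : δ + p ≤ L) : minPeriod (factorAt (fun x => f (x % δ)) E n) ≤ p := by
  set g := Nat.gcd δ p
  have hg0 : 0 < g := Nat.gcd_pos_of_pos_left _ hδ0
  have hg : (factorAt f 0 L).HasPeriod g := hδ.gcd hp (by simp only [length_factorAt]; omega)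
  refine (minPeriod_le hg0 ?_).trans (Nat.gcd_le_right _ hp0)
  rw [hasPeriod_factorAt_iff]
  intro x _
  have hmod : (E + x) % δ ≡ (E + x + g) % δ [MOD g] :=
    ((Nat.mod_modEq _ _).of_dvd (Nat.gcd_dvd_left δ p)).trans
      ((Nat.add_mod_right _ _).symm.trans
        ((Nat.mod_modEq _ _).of_dvd (Nat.gcd_dvd_left δ p)).symm)
  simpa [Nat.add_assoc] using apply_eq_of_hasPeriod_factorAt hg
    (by have := Nat.mod_lt (E + x) hδ0; omega) (by have := Nat.mod_lt (E + x + g) hδ0; omega) hmod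

/-- The run of length `n - m` is long enough for Fine–Wilf to pin its period down from `f` alone
(`minPeriod_factorAt_mod_le`). -/
def IsPeriodicReading (n m : ℕ) (f : ℕ → α) (w : List α) : Prop :=
  minPeriod w ≤ m ∧ (factorAt f 0 (n - m)).HasPeriod (minPeriod w) ∧
    ∃ E < minPeriod w, w = factorAt (fun x => f (x % minPeriod w)) E n

lemma exists_card_le_two_of_isPeriodicReading (f : ℕ → α) {n m : ℕ} (h8 : 8 * m ≤ n) :
    ∃ W : Finset (List α), W.card ≤ 2 ∧
      ∀ w, IsPalindrome w → IsPeriodicReading n m f w → w ∈ W := by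
  by_cases hex : ∃ w₀, IsPeriodicReading n m f w₀
  swap
  · exact ⟨∅, by simp, fun w _ hw => (hex ⟨w, hw⟩).elim⟩
  obtain ⟨w₀, hm₀, hper₀, E₀, -, hw₀⟩ := hex
  set δ := minPeriod w₀
  obtain ⟨W, hW, hmem⟩ := exists_card_le_two_of_isPalindrome (fun x => f (x % δ)) h8
  refine ⟨W, hW, fun w hpal ⟨hm, hper, E, hE, hw⟩ => ?_⟩
  have hle : minPeriod w ≤ δ := by
    have := minPeriod_factorAt_mod_le hper hper₀ (minPeriod_pos w) (minPeriod_pos w₀)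
      (E := E) (n := n) (by omega)
    rwa [← hw] at this
  have hge : δ ≤ minPeriod w := by
    have := minPeriod_factorAt_mod_le hper₀ hper (minPeriod_pos w₀) (minPeriod_pos w)
      (E := E₀) (n := n) (by omega)
    rwa [← hw₀] at this
  rw [le_antisymm hle hge] at hE hw
  rw [hw] at hpal ⊢
  exact hmem E (by omega) hpal

def IsReadableFrom (n m : ℕ) (f : ℕ → α) (w : List α) : Prop :=
  (∃ s < m, w = factorAt f s n) ∨ IsPeriodicReading n m f w

lemma exists_card_le_four_of_isReadableFrom (f : ℕ → α) {n m : ℕ} (h8 : 8 * m ≤ n) :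
    ∃ W : Finset (List α), W.card ≤ 4 ∧
      ∀ w, IsPalindrome w → IsReadableFrom n m f w → w ∈ W := by
  classical
  obtain ⟨W₁, hW₁, hmem₁⟩ := exists_card_le_two_of_isPalindrome f h8
  obtain ⟨W₂, hW₂, hmem₂⟩ := exists_card_le_two_of_isPeriodicReading f h8
  refine ⟨W₁ ∪ W₂, (Finset.card_union_le _ _).trans (by omega), ?_⟩
  rintro w hpal (⟨s, hs, rfl⟩ | hw)
  · exact Finset.mem_union_left _ (hmem₁ s hs.le hpal)
  · exact Finset.mem_union_right _ (hmem₂ w hpal hw)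

lemma IsReadableFrom.congr {n m : ℕ} {f g : ℕ → α} {w : List α}
    (hfg : ∀ x < n + m, f x = g x) (h : IsReadableFrom n m f w) : IsReadableFrom n m g w := by
  rcases h with ⟨s, hs, rfl⟩ | ⟨hm, hper, E, hE, hw⟩
  · exact Or.inl ⟨s, hs, factorAt_eq_factorAt_iff.mpr fun x hx => hfg _ (by omega)⟩
  refine Or.inr ⟨hm, ?_, E, hE, hw.trans ?_⟩
  · rw [hasPeriod_factorAt_iff] at hper ⊢
    intro x hx
    rw [← hfg _ (by omega), ← hfg _ (by omega)]
    exact hper x hx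
  · refine congrArg (factorAt · E n) (funext fun x => hfg _ ?_)
    have := Nat.mod_lt x (minPeriod_pos w)
    omega

def IsEventuallyPeriodic (u : ℕ → α) : Prop :=
  ∃ I P, 0 < P ∧ ∀ j, I ≤ j → u (j + P) = u j

lemma exists_hasPeriod_break {f : ℕ → α} {p L : ℕ} (hf : ∃ x, f x ≠ f (x + p))
    (h : (factorAt f 0 L).HasPeriod p) :
    ∃ b, L ≤ b ∧ p ≤ b ∧ (factorAt f 0 b).HasPeriod p ∧ f (b - p) ≠ f b := by
  classical
  have hex : ∃ L', ¬ (factorAt f 0 L').HasPeriod p := by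
    obtain ⟨x, hx⟩ := hf
    exact ⟨x + p + 1, fun h' => hx (by simpa using hasPeriod_factorAt_iff.mp h' x (by omega))⟩
  have hpos : 0 < Nat.find hex := by
    refine Nat.pos_of_ne_zero fun h0 => Nat.find_spec hex ?_
    rw [h0]
    exact List.hasPeriod_empty p
  set b := Nat.find hex - 1
  have hb : (factorAt f 0 b).HasPeriod p := not_not.mp (Nat.find_min hex (by omega))
  have hb' : ¬ (factorAt f 0 (b + 1)).HasPeriod p := by
    rw [show b + 1 = Nat.find hex by omega]
    exact Nat.find_spec hex
  have hLb : L ≤ b := by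
    by_contra hlt
    exact hb' (by simpa using hasPeriod_factorAt_mono h (a := 0) (L' := b + 1) (by omega))
  rw [hasPeriod_factorAt_iff] at hb hb'
  push Not at hb'
  obtain ⟨x, hx, hne⟩ := hb'
  have hxb : x + p = b := by
    by_contra hxb
    exact hne (hb x (by omega))
  refine ⟨b, hLb, by omega, hasPeriod_factorAt_iff.mpr hb, ?_⟩
  simpa [← hxb] using hne

def HasWindows (u : ℕ → α) (n m : ℕ) (w : List α) : Prop :=
  ∃ j, (∀ s < m, IsReadableFrom n m (fun x => u (j + s + x)) w) ∧
    ∀ s₁ s₂, s₁ < s₂ → s₂ < m → factorAt u (j + s₁) (n + m) ≠ factorAt u (j + s₂) (n + m)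

lemma hasWindows_of_minPeriod_le {u : ℕ → α} (hu : ¬ IsEventuallyPeriodic u) {n m i : ℕ}
    (h8 : 8 * m ≤ n) (hδ : minPeriod (factorAt u i n) ≤ m) : HasWindows u n m (factorAt u i n) := by
  set w := factorAt u i n
  set δ := minPeriod w
  have hδ0 : 0 < δ := minPeriod_pos w
  have hbreak : ∃ x, u (i + x) ≠ u (i + (x + δ)) := by
    by_contra! h
    exact hu ⟨i, δ, hδ0, fun j hj => by
      simpa [← Nat.add_assoc, Nat.add_sub_cancel' hj] using (h (j - i)).symm⟩
  -- the run of period `δ` through this occurrence of `w` ends at `i + b`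
  obtain ⟨b, hnb, hδb, hrun, hne⟩ := exists_hasPeriod_break (f := fun x => u (i + x)) hbreak
    (by simpa [factorAt_shift] using hasPeriod_minPeriod w)
  refine ⟨i + (b - n), fun s hs => Or.inr ⟨hδ, ?_, ?_⟩, fun s₁ s₂ h12 h2m heq => ?_⟩
  · have := hasPeriod_factorAt_mono hrun (a := b - n + s) (L' := n - m) (by omega)
    simp only [factorAt_shift] at this ⊢
    convert this using 2
    omega
  · obtain ⟨E, hE, hwE⟩ := exists_factorAt_eq_periodic hrun hδ0 hnb (a := b - n + s) (by omega)
    exact ⟨E, hE, by simpa [w, factorAt_shift, Nat.add_assoc] using hwE⟩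
  · -- equal windows would carry the break at `i + b` back into the run
    have hwin := factorAt_eq_factorAt_iff.mp heq
    rw [hasPeriod_factorAt_iff] at hrun
    have h₁ := hwin (n - s₂) (by omega)
    have h₂ := hwin (n - s₂ - δ) (by omega)
    have h₃ := hrun (b - (s₂ - s₁) - δ) (by omega)
    rw [show i + (b - n) + s₁ + (n - s₂) = i + (b - (s₂ - s₁)) by omega,
      show i + (b - n) + s₂ + (n - s₂) = i + b by omega] at h₁
    rw [show i + (b - n) + s₁ + (n - s₂ - δ) = i + (b - (s₂ - s₁) - δ) by omega,
      show i + (b - n) + s₂ + (n - s₂ - δ) = i + (b - δ) by omega] at h₂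
    rw [Nat.zero_add, show b - (s₂ - s₁) - δ + δ = b - (s₂ - s₁) by omega] at h₃
    exact hne (h₂.symm.trans (h₃.trans h₁))

lemma hasWindows_of_lt_minPeriod {u : ℕ → α} {n m i : ℕ} (hi : m ≤ i)
    (hδ : m < minPeriod (factorAt u i n)) : HasWindows u n m (factorAt u i n) := by
  refine ⟨i + 1 - m, fun s hs => Or.inl ⟨m - 1 - s, by omega, ?_⟩,
    fun s₁ s₂ h12 h2m heq => ?_⟩
  · rw [factorAt_shift]
    congr 1
    omega
  · have hwin := factorAt_eq_factorAt_iff.mp heq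
    have hper : (factorAt u i n).HasPeriod (s₂ - s₁) := by
      rw [hasPeriod_factorAt_iff]
      intro x hx
      have := hwin (m - 1 - s₁ + x) (by omega)
      rwa [show i + 1 - m + s₁ + (m - 1 - s₁ + x) = i + x by omega,
        show i + 1 - m + s₂ + (m - 1 - s₁ + x) = i + x + (s₂ - s₁) by omega] at this
    have := minPeriod_le (by omega) hper
    omega

lemma hasWindows_factorAt {u : ℕ → α} (hu : ¬ IsEventuallyPeriodic u) {n m i : ℕ} (h8 : 8 * m ≤ n)
    (hi : m ≤ i) : HasWindows u n m (factorAt u i n) := by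
  rcases le_or_gt (minPeriod (factorAt u i n)) m with h | h
  exacts [hasWindows_of_minPeriod_le hu h8 h, hasWindows_of_lt_minPeriod hi h]

lemma finite_setOf_isFactor [Finite α] (u : ℕ → α) (k : ℕ) :
    {w : List α | w.length = k ∧ IsFactor u w}.Finite :=
  (List.finite_length_eq α k).subset fun _ hw => hw.1

lemma finite_setOf_isPalindrome [Finite α] (u : ℕ → α) (k : ℕ) :
    {w : List α | w.length = k ∧ IsFactor u w ∧ IsPalindrome w}.Finite :=
  (List.finite_length_eq α k).subset fun _ hw => hw.1

lemma palComplexity_le_facComplexity [Finite α] (u : ℕ → α) (k : ℕ) :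
    palComplexity u k ≤ facComplexity u k :=
  Set.ncard_le_ncard (fun _ hw => ⟨hw.1, hw.2.1⟩) (finite_setOf_isFactor u k)

lemma exists_facComplexity_le_of_isEventuallyPeriodic {u : ℕ → α} (hu : IsEventuallyPeriodic u) :
    ∃ K, ∀ k, facComplexity u k ≤ K := by
  classical
  obtain ⟨I, P, hP, hper⟩ := hu
  refine ⟨I + P, fun k => ?_⟩
  have hred : ∀ i, ∃ i' < I + P, factorAt u i k = factorAt u i' k := by
    intro i
    induction i using Nat.strong_induction_on with
    | _ i ih =>
      by_cases hi : i < I + P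
      · exact ⟨i, hi, rfl⟩
      obtain ⟨i', hi', heq⟩ := ih (i - P) (by omega)
      refine ⟨i', hi', Eq.trans (factorAt_eq_factorAt_iff.mpr fun x _ => ?_) heq⟩
      simpa [show i - P + x + P = i + x by omega] using hper (i - P + x) (by omega)
  calc facComplexity u k
      ≤ (((Finset.range (I + P)).image (factorAt u · k) : Finset (List α)) : Set (List α)).ncard := by
        refine Set.ncard_le_ncard (fun w ⟨hlen, i, hi⟩ => ?_) (Finset.finite_toSet _)
        obtain ⟨i', hi', heq⟩ := hred i
        exact Finset.mem_image.mpr ⟨i', Finset.mem_range.mpr hi', by rw [hi, hlen, heq]⟩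
    _ ≤ I + P := by
        rw [Set.ncard_coe_finset]
        exact Finset.card_image_le.trans (by simp)

lemma card_mul_le_of_hasWindows {u : ℕ → α} {n m : ℕ} (h8 : 8 * m ≤ n) {S T : Finset (List α)}
    (hS : ∀ w ∈ S, IsPalindrome w ∧ HasWindows u n m w)
    (hT : ∀ V, V ∈ T ↔ ∃ j, V = factorAt u j (n + m)) : S.card * m ≤ T.card * 4 := by
  classical
  let R : List α → List α → Prop := fun w V =>
    ∃ j, V = factorAt u j (n + m) ∧ IsReadableFrom n m (fun x => u (j + x)) w
  refine Finset.card_mul_le_card_mul R (fun w hw => ?_) (fun V hV => ?_)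
  · obtain ⟨j, hread, hdist⟩ := (hS w hw).2
    calc m = (Finset.range m).card := (Finset.card_range m).symm
      _ ≤ _ := by
        refine Finset.card_le_card_of_injOn (fun s => factorAt u (j + s) (n + m))
          (fun s hs => ?_) (fun s₁ hs₁ s₂ hs₂ h => ?_)
        · simp only [Finset.coe_range, Set.mem_Iio] at hs
          exact Finset.mem_coe.mpr ((Finset.mem_bipartiteAbove R).mpr
            ⟨(hT _).mpr ⟨_, rfl⟩, j + s, rfl, hread s hs⟩)
        · simp only [Finset.coe_range, Set.mem_Iio] at hs₁ hs₂
          rcases lt_trichotomy s₁ s₂ with h' | h' | h'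
          exacts [(hdist _ _ h' hs₂ h).elim, h', (hdist _ _ h' hs₁ h.symm).elim]
  · obtain ⟨j₀, rfl⟩ := (hT V).mp hV
    obtain ⟨W, hW, hmem⟩ := exists_card_le_four_of_isReadableFrom (fun x => u (j₀ + x)) h8
    refine (Finset.card_le_card fun w hw => ?_).trans hW
    obtain ⟨hwS, j, hj, hread⟩ := (Finset.mem_bipartiteBelow R).mp hw
    exact hmem w (hS w hwS).1
      (hread.congr fun x hx => (factorAt_eq_factorAt_iff.mp hj x hx).symm)

theorem palComplexity_mul_le [Finite α] {u : ℕ → α} (hu : ¬ IsEventuallyPeriodic u) {n m : ℕ}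
    (h8 : 8 * m ≤ n) : palComplexity u n * m ≤ 4 * facComplexity u (n + m) + 2 * m := by
  classical
  have hpal := finite_setOf_isPalindrome u n
  have hfac := finite_setOf_isFactor u (n + m)
  set S := hpal.toFinset
  let IsLate : List α → Prop := fun w => ∃ i, m ≤ i ∧ w = factorAt u i n
  have hlate : (S.filter IsLate).card * m ≤ hfac.toFinset.card * 4 := by
    refine card_mul_le_of_hasWindows (u := u) h8 (fun w hw => ?_) (fun V => ?_)
    · obtain ⟨⟨-, -, hpal⟩, i, hi, rfl⟩ := by simpa [S] using hw
      exact ⟨hpal, hasWindows_factorAt hu h8 hi⟩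
    · rw [Set.Finite.mem_toFinset]
      refine ⟨fun ⟨hlen, i, hi⟩ => ⟨i, hlen ▸ hi⟩, ?_⟩
      rintro ⟨j, rfl⟩
      exact ⟨length_factorAt _ _ _, isFactor_factorAt _ _ _⟩
  have hearly : (S.filter (¬ IsLate ·)).card ≤ 2 := by
    obtain ⟨W, hW, hmem⟩ := exists_card_le_two_of_isPalindrome u h8
    refine (Finset.card_le_card fun w hw => ?_).trans hW
    obtain ⟨⟨hlen, ⟨i, hi⟩, hpal⟩, hnot⟩ := by simpa [S] using hw
    rw [hlen] at hi
    have him : i ≤ m := by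
      by_contra h
      exact hnot ⟨i, by omega, hi⟩
    rw [hi] at hpal ⊢
    exact hmem i him hpal
  have hsplit := Finset.card_filter_add_card_filter_not IsLate (s := S)
  rw [palComplexity, facComplexity, Set.ncard_eq_toFinset_card _ hpal,
    Set.ncard_eq_toFinset_card _ hfac, ← hsplit, Nat.add_mul]
  have := Nat.mul_le_mul_right m hearly
  omega

/-- A sequence with block complexity `O(k)` has bounded palindrome
complexity. -/
theorem stmt14 {α : Type*} [Fintype α] (u : ℕ → α) (C : ℕ)
    (h : ∀ k, 1 ≤ k → facComplexity u k ≤ C * k) :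
    ∃ C' : ℕ, ∀ k, 1 ≤ k → palComplexity u k ≤ C' := by
  by_cases hu : IsEventuallyPeriodic u
  · obtain ⟨K, hK⟩ := exists_facComplexity_le_of_isEventuallyPeriodic hu
    exact ⟨K, fun k _ => (palComplexity_le_facComplexity u k).trans (hK k)⟩
  refine ⟨64 * C + 2, fun n hn => ?_⟩
  rcases lt_or_ge n 8 with hn8 | hn8
  · calc palComplexity u n ≤ C * n := (palComplexity_le_facComplexity u n).trans (h n hn)
      _ ≤ 64 * C + 2 := by nlinarith
  set m := n / 8
  have hm : 0 < m := by omega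
  have hcount := palComplexity_mul_le hu (n := n) (m := m) (by omega)
  have hfac := (h (n + m) (by omega)).trans (Nat.mul_le_mul_left C (show n + m ≤ 16 * m by omega))
  refine Nat.le_of_mul_le_mul_right (c := m) ?_ hm
  nlinarith

end PalPaper
end

section
/- Let u be a fixed point of a primitive morphism σ on a finite alphabet A. Suppose there exists a non-empty word x that is a prefix of σ(a) for every a ∈ A, and write σ(a) = x z_a. Define the morphism σ_# by σ_#(a) = z_a x for every a ∈ A. Then σ_# is primitive, some positive power of σ_# admits a fixed point, and any fixed point v of any positive power of σ_# has exactly the same set of factors as u. -/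
/-
The words `y_L = σ^{L-1}(x) ⋯ σ(x) x` (`conjWord σ x L`) conjugate the iterates:
`y_L σ#^L(w) = σ^L(w) y_L`. Hence `σ#^L(a)` is a permutation of `σ^L(a)`, so `σ#` is primitive.
Since `σ^L(p) y_L` is a prefix of `u` for every prefix `p` of `u`, each `σ#^L(a)`, a suffix of
`σ^L(a) y_L`, is a factor of `u`; conversely `σ^L(a)` lies inside `σ#^L(w a)` as soon as `w` is
longer than `y_L`. Every factor of a fixed point of a power of a primitive morphism lies in a long
iterate of its first letter, and then in long iterates of every letter, so the two languages agree.
A fixed point of a power of `σ#` exists because the first-letter map of a finite alphabet has a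
periodic point.
-/

namespace PalPaper

variable {α : Type*}

def IsSeqPrefix (u : ℕ → α) (w : List α) : Prop := w = seqPrefix u w.length

section Sequences

variable {u : ℕ → α} {w w' t : List α}

@[simp]
lemma length_seqPrefix (u : ℕ → α) (n : ℕ) : (seqPrefix u n).length = n := by
  simp [seqPrefix]

lemma seqPrefix_add (u : ℕ → α) (m n : ℕ) :
    seqPrefix u (m + n) = seqPrefix u m ++ factorAt u m n := by
  simp [seqPrefix, factorAt, List.range_add, Function.comp_def]

lemma seqPrefix_succ (u : ℕ → α) (n : ℕ) : seqPrefix u (n + 1) = seqPrefix u n ++ [u n] := by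
  simp [seqPrefix, List.range_succ]

lemma isSeqPrefix_iff_getElem :
    IsSeqPrefix u w ↔ ∀ i (h : i < w.length), w[i] = u i := by
  rw [IsSeqPrefix, List.ext_getElem_iff]
  simp [seqPrefix]

lemma isSeqPrefix_seqPrefix (u : ℕ → α) (n : ℕ) : IsSeqPrefix u (seqPrefix u n) := by
  rw [IsSeqPrefix, length_seqPrefix]

lemma IsSeqPrefix.of_prefix (h' : IsSeqPrefix u w') (h : w <+: w') : IsSeqPrefix u w := by
  rw [isSeqPrefix_iff_getElem] at h' ⊢
  intro i hi
  rw [h.getElem hi, h']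

lemma IsSeqPrefix.prefix_of_length_le (hw : IsSeqPrefix u w) (hw' : IsSeqPrefix u w')
    (hlen : w.length ≤ w'.length) : w <+: w' := by
  rw [List.prefix_iff_eq_take]
  refine List.ext_getElem (by simpa using hlen) fun i h₁ h₂ => ?_
  rw [isSeqPrefix_iff_getElem] at hw hw'
  rw [List.getElem_take, hw, hw']

lemma IsSeqPrefix.exists_eq_of_mem (hw : IsSeqPrefix u w) {c : α} (hc : c ∈ w) :
    ∃ j, u j = c := by
  rw [hw] at hc
  obtain ⟨j, -, hj⟩ := List.mem_map.mp hc
  exact ⟨j, hj⟩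

lemma isFactor_iff_exists_isSeqPrefix : IsFactor u t ↔ ∃ w, IsSeqPrefix u w ∧ t <:+: w := by
  constructor
  · rintro ⟨i, hi⟩
    refine ⟨_, isSeqPrefix_seqPrefix u (i + t.length), seqPrefix u i, [], ?_⟩
    rw [seqPrefix_add, ← hi, List.append_nil]
  · rintro ⟨w, hw, p, q, rfl⟩
    refine ⟨p.length, List.ext_getElem (by simp [factorAt]) fun j h₁ h₂ => ?_⟩
    have := (isSeqPrefix_iff_getElem.mp hw) (p.length + j) (by simp; omega)
    simp only [List.append_assoc, List.getElem_append_right (Nat.le_add_right _ _),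
      Nat.add_sub_cancel_left, List.getElem_append_left h₁] at this
    simp [factorAt, this]

lemma IsFactor.of_infix (ht : IsFactor u t) (h : w <:+: t) : IsFactor u w := by
  obtain ⟨w', hw', ht'⟩ := isFactor_iff_exists_isSeqPrefix.mp ht
  exact isFactor_iff_exists_isSeqPrefix.mpr ⟨w', hw', h.trans ht'⟩

end Sequences

section Iterates

variable {f τ : α → List α} {u : ℕ → α} {w : List α}

@[simp]
lemma morphIter_zero (f : α → List α) (a : α) : morphIter f 0 a = [a] := rfl

lemma morphIter_succ (f : α → List α) (L : ℕ) (a : α) :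
    morphIter f (L + 1) a = (f a).flatMap (morphIter f L) := rfl

@[simp]
lemma flatMap_morphIter_zero (f : α → List α) (w : List α) : w.flatMap (morphIter f 0) = w :=
  List.flatMap_singleton' w

@[simp]
lemma morphIter_one (f : α → List α) : morphIter f 1 = f := by
  funext a
  simp [morphIter_succ]

lemma morphIter_add (f : α → List α) (p q : ℕ) (a : α) :
    morphIter f (p + q) a = (morphIter f q a).flatMap (morphIter f p) := by
  induction q generalizing a with
  | zero => simp
  | succ q ih => rw [← Nat.add_assoc, morphIter_succ, morphIter_succ, funext ih, List.flatMap_assoc]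

lemma flatMap_morphIter_add (f : α → List α) (p q : ℕ) (w : List α) :
    w.flatMap (morphIter f (p + q)) = (w.flatMap (morphIter f q)).flatMap (morphIter f p) := by
  rw [funext (morphIter_add f p q), List.flatMap_assoc]

lemma flatMap_morphIter_succ (f : α → List α) (L : ℕ) (w : List α) :
    w.flatMap (morphIter f (L + 1)) = (w.flatMap f).flatMap (morphIter f L) := by
  rw [flatMap_morphIter_add, morphIter_one]

lemma morphIter_mul (f : α → List α) (l m : ℕ) :
    morphIter (morphIter f l) m = morphIter f (l * m) := by
  induction m with
  | zero => rfl
  | succ m ih =>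
    funext a
    rw [morphIter_succ, ih, Nat.mul_succ, morphIter_add]

lemma morphIter_ne_nil (hne : ∀ a, f a ≠ []) (L : ℕ) (a : α) : morphIter f L a ≠ [] := by
  induction L generalizing a with
  | zero => simp
  | succ L ih =>
    obtain ⟨c, r, hc⟩ := List.exists_cons_of_ne_nil (hne a)
    simp [morphIter_succ, hc, ih c]

lemma length_le_length_flatMap (hne : ∀ a, f a ≠ []) (w : List α) :
    w.length ≤ (w.flatMap f).length := by
  induction w with
  | nil => simp
  | cons a w ih =>
    have := List.length_pos_iff.mpr (hne a)
    simp only [List.flatMap_cons, List.length_append, List.length_cons]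
    omega

lemma substPrefix_eq_flatMap (τ : α → List α) (u : ℕ → α) (n : ℕ) :
    substPrefix τ u n = (seqPrefix u n).flatMap τ := by
  rw [substPrefix, seqPrefix, List.flatMap_map]

lemma isFixedPointOf_iff :
    IsFixedPointOf τ u ↔ ∀ w, IsSeqPrefix u w → IsSeqPrefix u (w.flatMap τ) := by
  constructor
  · intro h w hw
    have := h w.length
    rwa [substPrefix_eq_flatMap, ← hw] at this
  · intro h n
    rw [substPrefix_eq_flatMap]
    exact h _ (isSeqPrefix_seqPrefix u n)

lemma IsFixedPointOf.isSeqPrefix_flatMap (hu : IsFixedPointOf τ u) (hw : IsSeqPrefix u w) :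
    IsSeqPrefix u (w.flatMap τ) :=
  isFixedPointOf_iff.mp hu w hw

lemma IsFixedPointOf.iterate (hu : IsFixedPointOf f u) (L : ℕ) :
    IsFixedPointOf (morphIter f L) u := by
  rw [isFixedPointOf_iff]
  induction L with
  | zero => simp only [flatMap_morphIter_zero, imp_self, implies_true]
  | succ L ih =>
    intro w hw
    rw [flatMap_morphIter_succ]
    exact ih _ (hu.isSeqPrefix_flatMap hw)

end Iterates

section Primitive

variable {f : α → List α} {k : ℕ} {t : List α}

lemma ne_nil_of_forall_mem_morphIter (hk1 : 1 ≤ k) (hk : ∀ a b, b ∈ morphIter f k a) (a : α) :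
    f a ≠ [] := by
  intro h
  obtain ⟨j, rfl⟩ := Nat.exists_eq_add_of_le' hk1
  simpa [morphIter_succ, h] using hk a a

lemma IsPrimitive.ne_nil (hf : IsPrimitive f) (a : α) : f a ≠ [] :=
  let ⟨_, hk1, hk⟩ := hf
  ne_nil_of_forall_mem_morphIter hk1 hk a

variable (hk1 : 1 ≤ k) (hk : ∀ a b, b ∈ morphIter f k a)
include hk1 hk

lemma mem_morphIter_of_le {q : ℕ} (hq : k ≤ q) (a b : α) : b ∈ morphIter f q a := by
  obtain ⟨j, rfl⟩ := Nat.exists_eq_add_of_le hq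
  obtain ⟨c, r, hc⟩ :=
    List.exists_cons_of_ne_nil (morphIter_ne_nil (ne_nil_of_forall_mem_morphIter hk1 hk) j a)
  rw [morphIter_add, hc, List.flatMap_cons]
  exact List.mem_append_left _ (hk c b)

lemma infix_morphIter_of_infix {m L : ℕ} {a : α} (ht : t <:+: morphIter f m a) (hL : m + k ≤ L)
    (c : α) : t <:+: morphIter f L c := by
  obtain ⟨j, rfl⟩ := Nat.exists_eq_add_of_le (Nat.le_of_add_right_le hL)
  rw [morphIter_add]
  have ha : [a] <:+: morphIter f j c :=
    (List.singleton_infix_iff _ _).mpr (mem_morphIter_of_le hk1 hk (by omega) c a)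
  exact ht.trans (by simpa using ha.flatMap (morphIter f m))

lemma lt_length_morphIter [Nontrivial α] {N p : ℕ} (h : N * k ≤ p) (a : α) :
    N < (morphIter f p a).length := by
  have hne := morphIter_ne_nil (ne_nil_of_forall_mem_morphIter hk1 hk)
  induction N generalizing p a with
  | zero => exact List.length_pos_iff.mpr (hne p a)
  | succ N ih =>
    obtain ⟨b, c, hbc⟩ := exists_pair_ne α
    obtain ⟨j, rfl⟩ := Nat.exists_eq_add_of_le' (le_trans (Nat.le_mul_of_pos_left k N.succ_pos) h)
    rw [morphIter_add]
    match hka : morphIter f k a with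
    | [] => simpa [hka] using hk a b
    | [d] =>
      have hb := hk a b
      have hc := hk a c
      simp only [hka, List.mem_singleton] at hb hc
      exact absurd (hb.trans hc.symm) hbc
    | d₁ :: d₂ :: r =>
      have h₁ := ih (p := j) (by rw [Nat.succ_mul] at h; omega) d₁
      have h₂ := List.length_pos_iff.mpr (hne j d₂)
      simp only [List.flatMap_cons, List.length_append]
      omega

end Primitive

lemma IsFixedPointOf.exists_eq {f : α → List α} {u : ℕ → α} (hf : IsPrimitive f)
    (hu : IsFixedPointOf f u) (c : α) : ∃ j, u j = c := by
  obtain ⟨k, -, hk⟩ := hf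
  have hpre := (hu.iterate k).isSeqPrefix_flatMap (isSeqPrefix_seqPrefix u 1)
  exact hpre.exists_eq_of_mem (by simpa [seqPrefix] using hk (u 0) c)

lemma IsFixedPointOf.exists_infix_morphIter [Nontrivial α] {f : α → List α} {v : ℕ → α}
    {t : List α} {l : ℕ} (hf : IsPrimitive f) (hl : 1 ≤ l) (hv : IsFixedPointOf (morphIter f l) v)
    (ht : IsFactor v t) : ∃ p, t <:+: morphIter f p (v 0) := by
  obtain ⟨k, hk1, hk⟩ := hf
  obtain ⟨w, hw, htw⟩ := isFactor_iff_exists_isSeqPrefix.mp ht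
  set p := l * (w.length * k)
  have hpre : IsSeqPrefix v (morphIter f p (v 0)) := by
    simpa [seqPrefix, morphIter_mul] using
      (hv.iterate (w.length * k)).isSeqPrefix_flatMap (isSeqPrefix_seqPrefix v 1)
  have hlen : w.length < (morphIter f p (v 0)).length :=
    lt_length_morphIter hk1 hk (Nat.le_mul_of_pos_left _ hl) _
  exact ⟨p, htw.trans (hw.prefix_of_length_le hpre hlen.le).isInfix⟩

def conjWord (f : α → List α) (x : List α) : ℕ → List α
  | 0 => []
  | L + 1 => x.flatMap (morphIter f L) ++ conjWord f x L

section Conjugate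

variable {f g : α → List α} {x : List α} (hfg : ∀ a, x ++ g a = f a ++ x)
include hfg

lemma append_flatMap_eq_flatMap_append (w : List α) : x ++ w.flatMap g = w.flatMap f ++ x := by
  induction w with
  | nil => simp
  | cons a w ih =>
    rw [List.flatMap_cons, List.flatMap_cons, ← List.append_assoc, hfg, List.append_assoc, ih,
      List.append_assoc]

lemma conjWord_append_flatMap_morphIter (L : ℕ) (w : List α) :
    conjWord f x L ++ w.flatMap (morphIter g L) = w.flatMap (morphIter f L) ++ conjWord f x L := by
  induction L generalizing w with
  | zero => simp [conjWord]
  | succ L ih =>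
    rw [conjWord, flatMap_morphIter_succ, flatMap_morphIter_succ, List.append_assoc, ih,
      ← List.append_assoc, ← List.flatMap_append, append_flatMap_eq_flatMap_append hfg,
      List.flatMap_append, List.append_assoc]

lemma morphIter_perm_morphIter (L : ℕ) (a : α) : (morphIter g L a).Perm (morphIter f L a) := by
  have h := conjWord_append_flatMap_morphIter hfg L [a]
  simp only [List.flatMap_singleton] at h
  rw [← List.perm_append_left_iff (conjWord f x L), h]
  exact List.perm_append_comm

lemma IsPrimitive.of_conj (hf : IsPrimitive f) : IsPrimitive g :=
  let ⟨k, hk1, hk⟩ := hf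
  ⟨k, hk1, fun a b => (morphIter_perm_morphIter hfg k a).mem_iff.mpr (hk a b)⟩

lemma morphIter_suffix_morphIter_append_conjWord (L : ℕ) (a : α) :
    morphIter g L a <:+ morphIter f L a ++ conjWord f x L :=
  ⟨_, by simpa using conjWord_append_flatMap_morphIter hfg L [a]⟩

lemma flatMap_morphIter_infix (hne : ∀ a, f a ≠ []) (L : ℕ) {W : List α}
    (hW : (conjWord f x L).length ≤ W.length) (w : List α) :
    w.flatMap (morphIter f L) <:+: (W ++ w).flatMap (morphIter g L) := by
  have hlen : (conjWord f x L).length ≤ (W.flatMap (morphIter f L)).length :=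
    hW.trans (length_le_length_flatMap (morphIter_ne_nil hne L) W)
  have h := congrArg (List.drop (conjWord f x L).length)
    (conjWord_append_flatMap_morphIter hfg L (W ++ w))
  rw [List.drop_left] at h
  rw [h, List.flatMap_append, List.append_assoc, List.drop_append_of_le_length hlen]
  exact List.infix_append' _ _ _

end Conjugate

section PrefixOfImages

variable {f : α → List α} {x : List α} {u : ℕ → α} (hu : IsFixedPointOf f u) (hx : ∀ a, x <+: f a)
include hu hx

lemma IsFixedPointOf.isSeqPrefix_flatMap_append {w : List α} (hw : IsSeqPrefix u w) :
    IsSeqPrefix u (w.flatMap f ++ x) := by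
  have hnext := hu.isSeqPrefix_flatMap (isSeqPrefix_seqPrefix u (w.length + 1))
  rw [seqPrefix_succ, ← hw, List.flatMap_append, List.flatMap_singleton] at hnext
  exact hnext.of_prefix ((List.prefix_append_right_inj _).mpr (hx _))

lemma IsFixedPointOf.isSeqPrefix_flatMap_morphIter_append_conjWord (L : ℕ) {w : List α}
    (hw : IsSeqPrefix u w) : IsSeqPrefix u (w.flatMap (morphIter f L) ++ conjWord f x L) := by
  induction L generalizing w with
  | zero => simpa [conjWord] using hw
  | succ L ih =>
    rw [conjWord, flatMap_morphIter_succ, ← List.append_assoc, ← List.flatMap_append]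
    exact ih (hu.isSeqPrefix_flatMap_append hx hw)

lemma IsFixedPointOf.isFactor_morphIter_append_conjWord (L j : ℕ) :
    IsFactor u (morphIter f L (u j) ++ conjWord f x L) := by
  refine isFactor_iff_exists_isSeqPrefix.mpr ⟨_,
    hu.isSeqPrefix_flatMap_morphIter_append_conjWord hx L (isSeqPrefix_seqPrefix u (j + 1)), ?_⟩
  rw [seqPrefix_succ, List.flatMap_append, List.flatMap_singleton, List.append_assoc]
  exact (List.suffix_append _ _).isInfix

end PrefixOfImages

section FixedPoint

variable {τ : α → List α}

lemma isFixedPointOf_const {a : α} (ha : τ a = [a]) : IsFixedPointOf τ (fun _ => a) := by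
  have hconst : ∀ w, IsSeqPrefix (fun _ => a) w ↔ ∀ b ∈ w, b = a := fun w => by
    simp [IsSeqPrefix, seqPrefix, List.eq_replicate_iff]
  refine isFixedPointOf_iff.mpr fun w hw => (hconst _).mpr fun b hb => ?_
  obtain ⟨c, hc, hbc⟩ := List.mem_flatMap.mp hb
  rwa [(hconst w).mp hw c hc, ha, List.mem_singleton] at hbc

lemma exists_forall_isSeqPrefix {B : ℕ → List α} (hB : ∀ m, B m <+: B (m + 1))
    (hlen : ∀ m, m < (B m).length) : ∃ v : ℕ → α, ∀ m, IsSeqPrefix v (B m) := by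
  have hmono : ∀ {m m'}, m ≤ m' → B m <+: B m' := fun h => by
    induction h with
    | refl => exact List.prefix_refl _
    | step _ ih => exact ih.trans (hB _)
  refine ⟨fun n => (B n)[n]'(hlen n), fun m => isSeqPrefix_iff_getElem.mpr fun i hi => ?_⟩
  rcases le_total m i with h | h
  · exact (hmono h).getElem hi
  · exact ((hmono h).getElem (hlen i)).symm

lemma exists_isFixedPointOf_of_eq_cons (hne : ∀ a, τ a ≠ []) {a : α} {w : List α}
    (ha : τ a = a :: w) : ∃ v, IsFixedPointOf τ v := by
  rcases w with _ | ⟨c, r⟩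
  · exact ⟨_, isFixedPointOf_const ha⟩
  have hsucc : ∀ m, morphIter τ (m + 1) a =
      morphIter τ m a ++ (c :: r).flatMap (morphIter τ m) := fun m => by
    rw [morphIter_succ, ha, List.flatMap_cons]
  have hlen : ∀ m, m < (morphIter τ m a).length := by
    intro m
    induction m with
    | zero => simp
    | succ m ih =>
      have := List.length_pos_iff.mpr (morphIter_ne_nil hne m c)
      simp only [hsucc, List.length_append, List.flatMap_cons]
      omega
  obtain ⟨v, hv⟩ := exists_forall_isSeqPrefix
    (fun m => (hsucc m).symm ▸ List.prefix_append _ _) hlen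
  refine ⟨v, isFixedPointOf_iff.mpr fun p hp => ?_⟩
  have hpa : p <+: morphIter τ p.length a := hp.prefix_of_length_le (hv _) (hlen _).le
  have hnext := hv (1 + p.length)
  rw [morphIter_add, morphIter_one] at hnext
  exact hnext.of_prefix (hpa.flatMap τ)

lemma exists_morphIter_eq_cons [Finite α] {f : α → List α} (hne : ∀ a, f a ≠ []) (a₀ : α) :
    ∃ l, 1 ≤ l ∧ ∃ a w, morphIter f l a = a :: w := by
  let head : α → α := fun a => (f a).head (hne a)
  have hhead : ∀ j a, ∃ w, morphIter f j a = head^[j] a :: w := by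
    intro j
    induction j with
    | zero => exact fun a => ⟨[], rfl⟩
    | succ j ih =>
      intro a
      obtain ⟨w, hw⟩ := ih (head a)
      refine ⟨w ++ (f a).tail.flatMap (morphIter f j), ?_⟩
      have hcons : f a = head a :: (f a).tail := (List.cons_head_tail _).symm
      conv_lhs => rw [morphIter_succ, hcons, List.flatMap_cons, hw]
      rfl
  obtain ⟨m, n, hmn, heq⟩ := Finite.exists_ne_map_eq_of_infinite (fun n => head^[n] a₀)
  wlog hlt : m < n generalizing m n
  · exact this n m hmn.symm heq.symm (by omega)
  obtain ⟨w, hw⟩ := hhead (n - m) (head^[m] a₀)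
  refine ⟨n - m, by omega, head^[m] a₀, w, ?_⟩
  rwa [← Function.iterate_add_apply, Nat.sub_add_cancel hlt.le, ← heq] at hw

lemma exists_isFixedPointOf_morphIter [Finite α] {f : α → List α} (hne : ∀ a, f a ≠ [])
    (a₀ : α) : ∃ l, 1 ≤ l ∧ ∃ v : ℕ → α, IsFixedPointOf (morphIter f l) v := by
  obtain ⟨l, hl, a, w, ha⟩ := exists_morphIter_eq_cons hne a₀
  exact ⟨l, hl, exists_isFixedPointOf_of_eq_cons (morphIter_ne_nil hne l) ha⟩

end FixedPoint

theorem stmt15_general {α : Type*} [Fintype α] (σ : α → List α) (hprim : IsPrimitive σ)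
    (u : ℕ → α) (hfix : IsFixedPointOf σ u)
    (x : List α) (z : α → List α) (hσ : ∀ a, σ a = x ++ z a)
    (σs : α → List α) (hσs : ∀ a, σs a = z a ++ x) :
    IsPrimitive σs ∧
    (∃ l, 1 ≤ l ∧ ∃ v : ℕ → α, IsFixedPointOf (morphIter σs l) v) ∧
    (∀ l, 1 ≤ l → ∀ v : ℕ → α, IsFixedPointOf (morphIter σs l) v →
      ∀ t : List α, IsFactor v t ↔ IsFactor u t) := by
  have hconj : ∀ a, x ++ σs a = σ a ++ x := fun a => by rw [hσ, hσs, List.append_assoc]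
  have hprims : IsPrimitive σs := hprim.of_conj hconj
  refine ⟨hprims, exists_isFixedPointOf_morphIter hprims.ne_nil (u 0), fun l hl v hv t => ?_⟩
  rcases subsingleton_or_nontrivial α with _ | _
  · rw [Subsingleton.elim v u]
  constructor
  · intro ht
    obtain ⟨p, htp⟩ := hv.exists_infix_morphIter hprims hl ht
    obtain ⟨j, hj⟩ := hfix.exists_eq hprim (v 0)
    refine (hfix.isFactor_morphIter_append_conjWord (fun a => ⟨z a, (hσ a).symm⟩) p j).of_infix ?_
    rw [hj]
    exact htp.trans (morphIter_suffix_morphIter_append_conjWord hconj p (v 0)).isInfix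
  · intro ht
    have hfix1 : IsFixedPointOf (morphIter σ 1) u := by rwa [morphIter_one]
    obtain ⟨m, htm⟩ := hfix1.exists_infix_morphIter hprim le_rfl ht
    obtain ⟨k, hk1, hk⟩ := hprim
    set L := l * (m + k)
    set n := (conjWord σ x L).length
    have hpre : IsSeqPrefix v ((seqPrefix v (n + 1)).flatMap (morphIter σs L)) := by
      rw [← morphIter_mul]
      exact (hv.iterate _).isSeqPrefix_flatMap (isSeqPrefix_seqPrefix v _)
    refine isFactor_iff_exists_isSeqPrefix.mpr ⟨_, hpre, ?_⟩
    rw [seqPrefix_succ]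
    have htL := infix_morphIter_of_infix hk1 hk htm (Nat.le_mul_of_pos_left _ hl) (v n)
    exact htL.trans (by
      simpa using flatMap_morphIter_infix hconj (ne_nil_of_forall_mem_morphIter hk1 hk) L
        (length_seqPrefix v n).ge [v n])

/-- If `u` is a fixed point of a primitive morphism `σ` with `σ a = x ++ z a`
(`x` non-empty) for all `a`, and `σ# a = z a ++ x`, then `σ#` is primitive,
some positive power of `σ#` admits a fixed point, and every fixed point of
every positive power of `σ#` has exactly the same factors as `u`. -/
theorem stmt15 {α : Type*} [Fintype α] (σ : α → List α) (hprim : IsPrimitive σ)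
    (u : ℕ → α) (hfix : IsFixedPointOf σ u)
    (x : List α) (hx : x ≠ []) (z : α → List α) (hσ : ∀ a, σ a = x ++ z a)
    (σs : α → List α) (hσs : ∀ a, σs a = z a ++ x) :
    IsPrimitive σs ∧
    (∃ l, 1 ≤ l ∧ ∃ v : ℕ → α, IsFixedPointOf (morphIter σs l) v) ∧
    (∀ l, 1 ≤ l → ∀ v : ℕ → α, IsFixedPointOf (morphIter σs l) v →
      ∀ t : List α, IsFactor v t ↔ IsFactor u t) :=
  stmt15_general σ hprim u hfix x z hσ σs hσs

end PalPaper
end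

section
/- Let w be a non-empty finite word and let u = www… be the periodic infinite sequence obtained by repeating w. If u contains a palindromic factor of length at least 2|w|, then w can be written as w = AB where A and B are both palindromes. -/
namespace PalPaper

variable {α : Type*}

/-! A palindromic factor `u[i, i + L)` of an `n`-periodic sequence with `L ≥ n` meets every
residue class mod `n`, so the reflection `x ↦ 2i + L - 1 - x` preserves `u` up to periodicity:
`u x = u y` whenever `x + y ≡ 2i + L - 1 [MOD n]`. Reading this on `w = u[0, n)` with
`m = (2i + L - 1) % n`, the reflection fixes `w[0, m]` (pairs with `p + q = m`) and
`w[m + 1, n)` (pairs with `p + q = m + n`), so both are palindromes. -/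

theorem isPalindrome_iff_getElem {l : List α} :
    IsPalindrome l ↔ ∀ i j (hi : i < l.length) (hj : j < l.length),
      i + j + 1 = l.length → l[i] = l[j] := by
  refine ⟨fun h i j hi hj hij => ?_, fun h => List.ext_getElem (by simp) fun i hi _ => ?_⟩
  · have hrev : l.reverse[i]'(by simpa) = l[i] := List.getElem_of_eq h _
    rw [← hrev, List.getElem_reverse]
    congr 1
    omega
  · rw [List.getElem_reverse]
    exact h _ _ _ _ (by simp only [List.length_reverse] at hi; omega)

theorem isPalindrome_take_of_getElem_eq {w : List α} {m : ℕ} (hm : m < w.length)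
    (h : ∀ p q (hp : p < w.length) (hq : q < w.length), p + q = m → w[p] = w[q]) :
    IsPalindrome (w.take (m + 1)) := by
  refine isPalindrome_iff_getElem.2 fun i j hi hj hij => ?_
  simp only [List.getElem_take]
  exact h _ _ _ _ (by simp only [List.length_take] at hij; omega)

theorem isPalindrome_drop_of_getElem_eq {w : List α} {m : ℕ}
    (h : ∀ p q (hp : p < w.length) (hq : q < w.length), p + q = m + w.length → w[p] = w[q]) :
    IsPalindrome (w.drop (m + 1)) := by
  refine isPalindrome_iff_getElem.2 fun i j hi hj hij => ?_
  simp only [List.getElem_drop]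
  exact h _ _ _ _ (by simp only [List.length_drop] at hi hij; omega)

theorem exists_eq_append_isPalindrome_of_getElem_eq {w : List α} (c : ℕ)
    (h : ∀ p q (hp : p < w.length) (hq : q < w.length),
      p + q ≡ c [MOD w.length] → w[p] = w[q]) :
    ∃ A B, w = A ++ B ∧ IsPalindrome A ∧ IsPalindrome B := by
  rcases eq_or_ne w [] with rfl | hw
  · exact ⟨[], [], rfl, rfl, rfl⟩
  have hm : c % w.length < w.length := Nat.mod_lt _ (List.length_pos_iff.2 hw)
  refine ⟨w.take (c % w.length + 1), w.drop (c % w.length + 1), (List.take_append_drop _ w).symm,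
    isPalindrome_take_of_getElem_eq hm fun p q hp hq hpq => h p q hp hq ?_,
    isPalindrome_drop_of_getElem_eq fun p q hp hq hpq => h p q hp hq ?_⟩
  · rw [hpq]
    exact Nat.mod_modEq c _
  · rw [hpq]
    exact Nat.add_modEq_right.trans (Nat.mod_modEq c _)

theorem getElem_factorAt (u : ℕ → α) (i k j : ℕ) (hj : j < (factorAt u i k).length) :
    (factorAt u i k)[j] = u (i + j) := by
  simp [factorAt]

theorem IsPalindrome.apply_eq_of_add_eq {u : ℕ → α} {i L : ℕ}
    (hs : IsPalindrome (factorAt u i L)) {a b : ℕ} (ha : i ≤ a) (hb : i ≤ b)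
    (hab : a + b + 1 = 2 * i + L) : u a = u b := by
  have hlen : (factorAt u i L).length = L := by
    simp only [factorAt, List.length_map, List.length_range]
  have := isPalindrome_iff_getElem.1 hs (a - i) (b - i) (by omega) (by omega) (by omega)
  rwa [getElem_factorAt, getElem_factorAt, Nat.add_sub_cancel' ha, Nat.add_sub_cancel' hb] at this

theorem exists_modEq_mem_Ico {n : ℕ} (hn : 0 < n) (i x : ℕ) :
    ∃ a, i ≤ a ∧ a < i + n ∧ a ≡ x [MOD n] := by
  have hi := Nat.mod_lt i hn
  have hr := Nat.mod_lt (x + (n - i % n)) hn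
  refine ⟨i + (x + (n - i % n)) % n, by omega, by omega, ?_⟩
  calc i + (x + (n - i % n)) % n ≡ i % n + (x + (n - i % n)) [MOD n] :=
        (Nat.mod_modEq i n).symm.add (Nat.mod_modEq _ n)
    _ = x + n := by omega
    _ ≡ x [MOD n] := Nat.add_modEq_right

theorem apply_eq_of_periodic_of_isPalindrome_factorAt {u : ℕ → α} {n i L : ℕ}
    (hper : Function.Periodic u n) (hn : 0 < n) (hL : n ≤ L) (hs : IsPalindrome (factorAt u i L))
    {x y : ℕ} (hxy : x + y + 1 ≡ 2 * i + L [MOD n]) : u x = u y := by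
  obtain ⟨a, hia, han, hax⟩ := exists_modEq_mem_Ico hn i x
  have hb : a + (2 * i + L - 1 - a) + 1 = 2 * i + L := by omega
  have hby : 2 * i + L - 1 - a ≡ y [MOD n] :=
    hax.add_left_cancel ((hb ▸ hxy.symm).add_right_cancel' 1)
  calc u x = u a := by rw [← hper.map_mod_nat x, ← hper.map_mod_nat a, hax]
    _ = u (2 * i + L - 1 - a) := hs.apply_eq_of_add_eq hia (by omega) hb
    _ = u y := by rw [← hper.map_mod_nat y, ← hper.map_mod_nat (2 * i + L - 1 - a), hby]

/-- If the periodic sequence `w w w ⋯` contains a palindromic factor of length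
at least `2|w|`, then `w = A ++ B` with `A` and `B` palindromes. -/
theorem stmt18 {α : Type*} (w : List α) (hw : w ≠ []) (u : ℕ → α)
    (hu : ∀ n, u n = w[n % w.length]'(Nat.mod_lt _ (List.length_pos_iff.mpr hw)))
    (h : ∃ s : List α, IsFactor u s ∧ IsPalindrome s ∧ 2 * w.length ≤ s.length) :
    ∃ A B : List α, w = A ++ B ∧ IsPalindrome A ∧ IsPalindrome B := by
  obtain ⟨s, ⟨i, hs⟩, hpal, hlen⟩ := h
  rw [hs] at hpal
  have hn : 0 < w.length := List.length_pos_iff.2 hw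
  have hper : Function.Periodic u w.length := fun x => by simp only [hu, Nat.add_mod_right]
  have hw_eq_u : ∀ p (hp : p < w.length), w[p] = u p := fun p hp => by
    simp only [hu, Nat.mod_eq_of_lt hp]
  refine exists_eq_append_isPalindrome_of_getElem_eq (2 * i + s.length - 1)
    fun p q hp hq hpq => ?_
  rw [hw_eq_u p hp, hw_eq_u q hq]
  refine apply_eq_of_periodic_of_isPalindrome_factorAt hper hn (by omega) hpal ?_
  simpa only [show 2 * i + s.length - 1 + 1 = 2 * i + s.length by omega] using hpq.add_right 1

end PalPaper
end
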